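/- arXiv:2303.14359 — 5 statements merged into one kernel-verified Lean document; each statement's English description precedes it below -/
import Mathlib

section
/- For every bounded random compact operator T and every ε ∈ (0, 3) there exist a bounded random compact operator T̃ with ‖T − T̃‖_∞ ≤ ε and measurable maps e_i : Ω → H, i = 1, 2, …, such that for ℙ-a.e. ω the vectors (e_i(ω))_{i ≥ 1} form an orthonormal family in H and T̃(ω) e_i(ω) = (ε/3)^i · e_i(θω) for every i ≥ 1. -/
/-!
Put `η = ε / 3`. A compact operator sends an orthonormal sequence to a null sequence, so for each
`k` one can choose, measurably in `ω`, a vector `e k ω` of a fixed orthonormal family with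
`‖T ω (e k ω)‖ < η / 2 ^ k`, distinct `k` using disjoint parts of the family. Adding to `T ω` the
rank-one operators `⟪e k ω, ·⟫ • (η ^ (k + 1) • e k (θ ω) - T ω (e k ω))` forces
`T' ω (e k ω) = η ^ (k + 1) • e k (θ ω)`. The perturbation is compact, its diagonal part
`∑ η ^ (k + 1) ⟪e k ω, ·⟫ e k (θ ω)` has norm at most `η` by orthonormality of both families, and
the remaining part has norm at most `∑ η / 2 ^ k = 2 η`.
-/

open MeasureTheory Filter Topology TopologicalSpace
open scoped RealInnerProductSpace ENNReal

noncomputable section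

variable {Ω H : Type*}

/-- A bounded random compact operator: strongly measurable, pointwise compact, and with
finite essential supremum of the operator norms. -/
structure IsBddRandomCompactOp [NormedAddCommGroup H] [NormedSpace ℝ H] [MeasurableSpace H]
    [MeasurableSpace Ω] (μ : Measure Ω) (T : Ω → H →L[ℝ] H) : Prop where
  meas : ∀ x : H, Measurable fun ω => T ω x
  compact : ∀ ω, IsCompactOperator (T ω)
  bdd : essSup (fun ω => (‖T ω‖₊ : ℝ≥0∞)) μ < ⊤

open InnerProductSpace

section Orthonormal

variable {𝕜 E : Type*} [RCLike 𝕜] [NormedAddCommGroup E] [InnerProductSpace 𝕜 E]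

theorem exists_orthonormal_of_not_finiteDimensional (ι : Type*) [Countable ι]
    (h : ¬ FiniteDimensional 𝕜 E) : ∃ b : ι → E, Orthonormal 𝕜 b := by
  let B := Module.Basis.ofVectorSpace 𝕜 E
  have : Infinite (Module.Basis.ofVectorSpaceIndex 𝕜 E) := by
    by_contra hfin
    rw [not_infinite_iff_finite] at hfin
    exact h (Module.Finite.of_basis B)
  obtain ⟨f, hf⟩ := Countable.exists_injective_nat ι
  have hv : LinearIndependent 𝕜 (B ∘ Infinite.natEmbedding _) :=
    B.linearIndependent.comp _ (Infinite.natEmbedding _).injective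
  exact ⟨gramSchmidtNormed 𝕜 (B ∘ Infinite.natEmbedding _) ∘ f,
    (gramSchmidtNormed_orthonormal hv).comp f hf⟩

theorem Orthonormal.tendsto_inner_atTop_zero {b : ℕ → E} (hb : Orthonormal 𝕜 b) (x : E) :
    Tendsto (fun n => inner 𝕜 x (b n)) atTop (𝓝 0) := by
  have h := (hb.inner_products_summable x).tendsto_atTop_zero
  rw [tendsto_zero_iff_norm_tendsto_zero]
  simp_rw [norm_inner_symm x]
  simpa using h.sqrt

theorem IsCompactOperator.tendsto_apply_orthonormal [CompleteSpace E] {F : Type*}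
    [NormedAddCommGroup F] [InnerProductSpace 𝕜 F] {C : E →L[𝕜] F}
    (hC : IsCompactOperator C) {b : ℕ → E} (hb : Orthonormal 𝕜 b) :
    Tendsto (fun n => C (b n)) atTop (𝓝 0) := by
  obtain ⟨K, hK, hCK⟩ := hC.image_closedBall_subset_compact (f := (C : E →ₗ[𝕜] F)) 1
  refine tendsto_of_subseq_tendsto fun ns hns => ?_
  obtain ⟨a, -, φ, hφ, hlim⟩ := hK.tendsto_subseq (x := fun n => C (b (ns n)))
    fun n => hCK ⟨b (ns n), by simp [hb.norm_eq_one], rfl⟩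
  refine ⟨φ, ?_⟩
  suffices a = 0 by rwa [this] at hlim
  -- by Riesz `⟪a, C x⟫ = ⟪z, x⟫`, and `⟪z, b n⟫ → 0` by Bessel's inequality
  set z := (toDual 𝕜 E).symm ((innerSL 𝕜 a).comp C)
  have h_to_self : Tendsto (fun n => inner 𝕜 a (C (b (ns (φ n))))) atTop (𝓝 (inner 𝕜 a a)) :=
    tendsto_const_nhds.inner hlim
  have h_to_zero : Tendsto (fun n => inner 𝕜 a (C (b (ns (φ n))))) atTop (𝓝 0) := by
    have := (hb.tendsto_inner_atTop_zero z).comp (hns.comp hφ.tendsto_atTop)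
    simpa [z, toDual_symm_apply, Function.comp_def] using this
  exact inner_self_eq_zero.mp (tendsto_nhds_unique h_to_self h_to_zero)

end Orthonormal

section RankOne

variable {𝕜 E F ι : Type*} [RCLike 𝕜] [NormedAddCommGroup E] [InnerProductSpace 𝕜 E]
  [NormedAddCommGroup F] [InnerProductSpace 𝕜 F]

-- `rankOne 𝕜 x y` factors through the locally compact space `𝕜`
theorem isCompactOperator_rankOne (x : F) (y : E) : IsCompactOperator (rankOne 𝕜 x y) :=
  (isCompactOperator_of_locallyCompactSpace_dom (innerSL 𝕜 y)).clm_comp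
    (ContinuousLinearMap.toSpanSingleton 𝕜 x)

theorem isCompactOperator_tsum [CompleteSpace F] {f : ι → E →L[𝕜] F} (hf : Summable f)
    (h : ∀ i, IsCompactOperator (f i)) : IsCompactOperator ⇑(∑' i, f i) :=
  isCompactOperator_of_tendsto hf.hasSum <| Eventually.of_forall fun _ =>
    Submodule.sum_mem (compactOperator (RingHom.id 𝕜) E F) fun i _ => h i

theorem Orthonormal.summable_rankOne [CompleteSpace F] {e : ι → E} {u : ι → F}
    (he : Orthonormal 𝕜 e) (hu : Summable fun i => ‖u i‖) :
    Summable fun i => rankOne 𝕜 (u i) (e i) :=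
  Summable.of_norm (by simpa [he.norm_eq_one] using hu)

theorem hasSum_tsum_rankOne_apply {e : ι → E} {u : ι → F}
    (hs : Summable fun i => rankOne 𝕜 (u i) (e i)) (x : E) :
    HasSum (fun i => inner 𝕜 (e i) x • u i) ((∑' i, rankOne 𝕜 (u i) (e i)) x) :=
  hs.hasSum.mapL (ContinuousLinearMap.apply 𝕜 F x)

theorem Orthonormal.tsum_rankOne_apply_self {e : ι → E} {u : ι → F} (he : Orthonormal 𝕜 e)
    (hs : Summable fun i => rankOne 𝕜 (u i) (e i)) (j : ι) :
    (∑' i, rankOne 𝕜 (u i) (e i)) (e j) = u j := by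
  refine (hasSum_tsum_rankOne_apply hs (e j)).unique ?_
  convert hasSum_single (f := fun i => inner 𝕜 (e i) (e j) • u i) j fun i hi => by
    simp [he.inner_eq_zero hi]
  simp [inner_self_eq_norm_sq_to_K, he.norm_eq_one]

theorem Orthonormal.norm_sum_rankOne_smul_le {e : ι → E} {f : ι → F} (he : Orthonormal 𝕜 e)
    (hf : Orthonormal 𝕜 f) {c : ι → 𝕜} {M : ℝ} (hM : 0 ≤ M) (hc : ∀ i, ‖c i‖ ≤ M)
    (s : Finset ι) : ‖∑ i ∈ s, rankOne 𝕜 (c i • f i) (e i)‖ ≤ M := by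
  refine ContinuousLinearMap.opNorm_le_bound _ hM fun x => ?_
  have hsq : ‖(∑ i ∈ s, rankOne 𝕜 (c i • f i) (e i)) x‖ ^ 2 ≤ (M * ‖x‖) ^ 2 :=
    calc ‖(∑ i ∈ s, rankOne 𝕜 (c i • f i) (e i)) x‖ ^ 2
        = ∑ i ∈ s, ‖c i * inner 𝕜 (e i) x‖ ^ 2 := by
          simpa [smul_smul] using hf.orthogonalFamily.norm_sum (fun i => c i * inner 𝕜 (e i) x) s
      _ ≤ ∑ i ∈ s, M ^ 2 * ‖inner 𝕜 (e i) x‖ ^ 2 := by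
          gcongr with i
          rw [norm_mul, mul_pow]
          gcongr
          exact hc i
      _ = M ^ 2 * ∑ i ∈ s, ‖inner 𝕜 (e i) x‖ ^ 2 := (Finset.mul_sum _ _ _).symm
      _ ≤ M ^ 2 * ‖x‖ ^ 2 := by gcongr; exact he.sum_inner_products_le x
      _ = (M * ‖x‖) ^ 2 := by ring
  exact (pow_le_pow_iff_left₀ (norm_nonneg _) (by positivity) two_ne_zero).mp hsq

theorem Orthonormal.norm_tsum_rankOne_smul_le {e : ι → E} {f : ι → F} (he : Orthonormal 𝕜 e)
    (hf : Orthonormal 𝕜 f) {c : ι → 𝕜} {M : ℝ} (hM : 0 ≤ M) (hc : ∀ i, ‖c i‖ ≤ M) :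
    ‖∑' i, rankOne 𝕜 (c i • f i) (e i)‖ ≤ M := by
  by_cases hs : Summable fun i => rankOne 𝕜 (c i • f i) (e i)
  · exact le_of_tendsto' hs.hasSum.norm (he.norm_sum_rankOne_smul_le hf hM hc)
  · rwa [tsum_eq_zero_of_not_summable hs, norm_zero]

end RankOne

section Correction

variable {𝕜 E F ι : Type*} [RCLike 𝕜] [NormedAddCommGroup E] [InnerProductSpace 𝕜 E]
  [NormedAddCommGroup F] [InnerProductSpace 𝕜 F] [CompleteSpace F]

def rankOneCorrection (T : E →L[𝕜] F) (e : ι → E) (v : ι → F) : E →L[𝕜] F :=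
  ∑' i, rankOne 𝕜 (v i - T (e i)) (e i)

variable {T : E →L[𝕜] F} {e : ι → E} {v : ι → F}

theorem Orthonormal.summable_rankOne_sub (he : Orthonormal 𝕜 e) (hv : Summable fun i => ‖v i‖)
    (hTe : Summable fun i => ‖T (e i)‖) :
    Summable fun i => rankOne 𝕜 (v i - T (e i)) (e i) :=
  he.summable_rankOne <| (hv.add hTe).of_nonneg_of_le (fun _ => norm_nonneg _)
    fun _ => norm_sub_le _ _

theorem hasSum_rankOneCorrection_apply (he : Orthonormal 𝕜 e) (hv : Summable fun i => ‖v i‖)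
    (hTe : Summable fun i => ‖T (e i)‖) (x : E) :
    HasSum (fun i => inner 𝕜 (e i) x • (v i - T (e i))) (rankOneCorrection T e v x) :=
  hasSum_tsum_rankOne_apply (he.summable_rankOne_sub hv hTe) x

theorem add_rankOneCorrection_apply_self (he : Orthonormal 𝕜 e) (hv : Summable fun i => ‖v i‖)
    (hTe : Summable fun i => ‖T (e i)‖) (j : ι) :
    (T + rankOneCorrection T e v) (e j) = v j := by
  rw [add_apply, rankOneCorrection,
    he.tsum_rankOne_apply_self (he.summable_rankOne_sub hv hTe), add_sub_cancel]

theorem isCompactOperator_rankOneCorrection (he : Orthonormal 𝕜 e)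
    (hv : Summable fun i => ‖v i‖) (hTe : Summable fun i => ‖T (e i)‖) :
    IsCompactOperator (rankOneCorrection T e v) :=
  isCompactOperator_tsum (he.summable_rankOne_sub hv hTe) fun _ => isCompactOperator_rankOne _ _

theorem norm_rankOneCorrection_le (he : Orthonormal 𝕜 e) (hv : Summable fun i => ‖v i‖)
    (hTe : Summable fun i => ‖T (e i)‖) :
    ‖rankOneCorrection T e v‖ ≤ ‖∑' i, rankOne 𝕜 (v i) (e i)‖ + ∑' i, ‖T (e i)‖ := by
  have hsv := he.summable_rankOne hv
  have hsT := he.summable_rankOne hTe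
  calc ‖rankOneCorrection T e v‖
      = ‖∑' i, rankOne 𝕜 (v i) (e i) - ∑' i, rankOne 𝕜 (T (e i)) (e i)‖ := by
        simp only [rankOneCorrection, map_sub, sub_apply, hsv.tsum_sub hsT]
    _ ≤ ‖∑' i, rankOne 𝕜 (v i) (e i)‖ + ‖∑' i, rankOne 𝕜 (T (e i)) (e i)‖ := norm_sub_le _ _
    _ ≤ ‖∑' i, rankOne 𝕜 (v i) (e i)‖ + ∑' i, ‖T (e i)‖ := by
        gcongr
        simpa [he.norm_eq_one] using norm_tsum_le_tsum_norm
          (f := fun i => rankOne 𝕜 (T (e i)) (e i)) (by simpa [he.norm_eq_one])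

end Correction

theorem measurable_of_hasSum {E : Type*} [TopologicalSpace E] [PseudoMetrizableSpace E]
    [MeasurableSpace E] [BorelSpace E] [AddCommMonoid E] [ContinuousAdd E] [MeasurableAdd₂ E]
    [MeasurableSpace Ω] {f : ℕ → Ω → E} {g : Ω → E} (hf : ∀ n, Measurable (f n))
    (h : ∀ ω, HasSum (fun n => f n ω) (g ω)) : Measurable g :=
  measurable_of_tendsto_metrizable (fun _ => Finset.measurable_fun_sum _ fun k _ => hf k)
    (tendsto_pi_nhds.2 fun ω => (h ω).tendsto_sum_nat)

theorem exists_measurable_orthonormal_norm_apply_lt {𝕜 : Type*} [RCLike 𝕜]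
    [NormedAddCommGroup H] [InnerProductSpace 𝕜 H] [CompleteSpace H] [MeasurableSpace H]
    [OpensMeasurableSpace H] [MeasurableSpace Ω] (hinf : ¬ FiniteDimensional 𝕜 H) {T : Ω → H →L[𝕜] H}
    (hmeas : ∀ x, Measurable fun ω => T ω x) (hcomp : ∀ ω, IsCompactOperator (T ω))
    {c : ℕ → ℝ} (hc : ∀ k, 0 < c k) :
    ∃ e : ℕ → Ω → H, (∀ k, Measurable (e k)) ∧ (∀ k, Measurable fun ω => T ω (e k ω)) ∧
      (∀ ω, Orthonormal 𝕜 fun k => e k ω) ∧ ∀ k ω, ‖T ω (e k ω)‖ < c k := by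
  -- the `k`-th vector is taken from the `k`-th row of `b`, so the choices are distinct
  obtain ⟨b, hb⟩ := exists_orthonormal_of_not_finiteDimensional (ℕ × ℕ) hinf
  have hex : ∀ k ω, ∃ j, ‖T ω (b (k, j))‖ < c k := fun k ω =>
    (((hcomp ω).tendsto_apply_orthonormal (hb.comp _ (Prod.mk_right_injective k))).norm.eventually
      (gt_mem_nhds (by simpa using hc k))).exists
  have hj : ∀ k, Measurable fun ω => Nat.find (hex k ω) := fun k =>
    measurable_find (hex k) fun _ => measurableSet_lt (hmeas _).norm measurable_const
  refine ⟨fun k ω => b (k, Nat.find (hex k ω)),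
    fun k => (measurable_from_nat (f := fun j => b (k, j))).comp (hj k), fun k => ?_,
    fun ω => hb.comp _ fun k l h => (Prod.ext_iff.1 h).1, fun k ω => Nat.find_spec (hex k ω)⟩
  exact (measurable_from_prod_countable_left (f := fun p : Ω × ℕ => T p.1 (b (k, p.2)))
    fun j => hmeas (b (k, j))).comp (measurable_id.prodMk (hj k))

namespace IsBddRandomCompactOp

variable [NormedAddCommGroup H] [NormedSpace ℝ H] [MeasurableSpace H] [MeasurableSpace Ω]
  {μ : Measure Ω} {S T : Ω → H →L[ℝ] H}

theorem add [MeasurableAdd₂ H] (hT : IsBddRandomCompactOp μ T) (hS : IsBddRandomCompactOp μ S) :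
    IsBddRandomCompactOp μ (T + S) where
  meas x := (hT.meas x).add (hS.meas x)
  compact ω := by simpa using (hT.compact ω).add (hS.compact ω)
  bdd := calc
    essSup (fun ω => (‖(T + S) ω‖₊ : ℝ≥0∞)) μ
        ≤ essSup ((fun ω => (‖T ω‖₊ : ℝ≥0∞)) + fun ω => (‖S ω‖₊ : ℝ≥0∞)) μ :=
          essSup_mono_ae <| Eventually.of_forall fun ω => by
            simpa using ENNReal.coe_le_coe.2 (nnnorm_add_le (T ω) (S ω))
    _ ≤ _ := ENNReal.essSup_add_le _ _
    _ < ⊤ := ENNReal.add_lt_top.2 ⟨hT.bdd, hS.bdd⟩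

theorem of_norm_le (hmeas : ∀ x, Measurable fun ω => T ω x)
    (hcomp : ∀ ω, IsCompactOperator (T ω)) {C : ℝ} (hC : ∀ ω, ‖T ω‖ ≤ C) :
    IsBddRandomCompactOp μ T where
  meas := hmeas
  compact := hcomp
  bdd := (essSup_le_of_ae_le (ENNReal.ofReal C) <| Eventually.of_forall fun ω =>
      (ofReal_norm (T ω)).symm.trans_le (ENNReal.ofReal_le_ofReal (hC ω))).trans_lt
    ENNReal.ofReal_lt_top

end IsBddRandomCompactOp

section Geometric

variable [NormedAddCommGroup H] [InnerProductSpace ℝ H]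
  {T : H →L[ℝ] H} {e f : ℕ → H} {η : ℝ}

theorem Orthonormal.summable_norm_pow_succ_smul (hf : Orthonormal ℝ f) (hη0 : 0 ≤ η)
    (hη1 : η < 1) : Summable fun k => ‖η ^ (k + 1) • f k‖ := by
  simpa [norm_smul, hf.norm_eq_one, abs_of_nonneg hη0, pow_succ] using
    (summable_geometric_of_lt_one hη0 hη1).mul_right η

theorem summable_norm_apply_of_le_geometric (hTe : ∀ k, ‖T (e k)‖ ≤ η * (1 / 2) ^ k) :
    Summable fun k => ‖T (e k)‖ :=
  (summable_geometric_two.mul_left η).of_nonneg_of_le (fun _ => norm_nonneg _) hTe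

theorem norm_rankOneCorrection_pow_succ_smul_le [CompleteSpace H] (he : Orthonormal ℝ e)
    (hf : Orthonormal ℝ f) (hη0 : 0 ≤ η) (hη1 : η < 1) (hTe : ∀ k, ‖T (e k)‖ ≤ η * (1 / 2) ^ k) :
    ‖rankOneCorrection T e (fun k => η ^ (k + 1) • f k)‖ ≤ 3 * η :=
  calc ‖rankOneCorrection T e (fun k => η ^ (k + 1) • f k)‖
      ≤ ‖∑' k, rankOne ℝ (η ^ (k + 1) • f k) (e k)‖ + ∑' k, ‖T (e k)‖ :=
        norm_rankOneCorrection_le he (hf.summable_norm_pow_succ_smul hη0 hη1)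
          (summable_norm_apply_of_le_geometric hTe)
    _ ≤ η + η * 2 := by
        gcongr
        · refine he.norm_tsum_rankOne_smul_le hf hη0 fun k => ?_
          rw [Real.norm_eq_abs, abs_of_nonneg (by positivity)]
          exact pow_le_of_le_one hη0 hη1.le k.succ_ne_zero
        · rw [← tsum_geometric_two, ← tsum_mul_left]
          exact (summable_norm_apply_of_le_geometric hTe).tsum_le_tsum hTe
            (summable_geometric_two.mul_left η)
    _ = 3 * η := by ring

end Geometric

theorem perturbation_with_countably_many_exponents_general
    [NormedAddCommGroup H] [InnerProductSpace ℝ H] [CompleteSpace H] [SeparableSpace H]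
    [MeasurableSpace H] [BorelSpace H] (hinf : ¬ FiniteDimensional ℝ H)
    [MeasurableSpace Ω] (μ : Measure Ω)
    (θ : Ω ≃ᵐ Ω)
    (T : Ω → H →L[ℝ] H) (hT : IsBddRandomCompactOp μ T)
    (ε : ℝ) (hε : ε ∈ Set.Ioo (0 : ℝ) 3) :
    ∃ (T' : Ω → H →L[ℝ] H) (e : ℕ → Ω → H), IsBddRandomCompactOp μ T' ∧
      (∀ᵐ ω ∂μ, ‖T ω - T' ω‖ ≤ ε) ∧
      (∀ i : ℕ, Measurable (e i)) ∧
      (∀ᵐ ω ∂μ, Orthonormal ℝ (fun i : ℕ => e i ω) ∧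
        ∀ i : ℕ, T' ω (e i ω) = (ε / 3) ^ (i + 1) • e i (θ ω)) := by
  obtain ⟨hε0, hε3⟩ := hε
  have : SecondCountableTopology H := UniformSpace.secondCountable_of_separable H
  set η := ε / 3
  have hη0 : 0 ≤ η := by positivity
  have hη1 : η < 1 := by simp only [η]; linarith
  obtain ⟨e, he_meas, hTe_meas, he, hTe⟩ := exists_measurable_orthonormal_norm_apply_lt hinf
    hT.meas hT.compact (c := fun k => η * (1 / 2) ^ k) fun k => by positivity
  set D : Ω → H →L[ℝ] H :=
    fun ω => rankOneCorrection (T ω) (e · ω) fun k => η ^ (k + 1) • e k (θ ω)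
  have hv : ∀ ω, Summable fun k => ‖η ^ (k + 1) • e k (θ ω)‖ := fun ω =>
    (he (θ ω)).summable_norm_pow_succ_smul hη0 hη1
  have hTe_sum : ∀ ω, Summable fun k => ‖T ω (e k ω)‖ := fun ω =>
    summable_norm_apply_of_le_geometric fun k => (hTe k ω).le
  have hD_norm : ∀ ω, ‖D ω‖ ≤ ε := fun ω => by
    simpa [η, mul_div_cancel₀] using
      norm_rankOneCorrection_pow_succ_smul_le (he ω) (he (θ ω)) hη0 hη1 fun k => (hTe k ω).le
  have hD_meas : ∀ x, Measurable fun ω => D ω x := fun x =>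
    measurable_of_hasSum (fun k => ((he_meas k).inner measurable_const).smul
        ((((he_meas k).comp θ.measurable).const_smul _).sub (hTe_meas k)))
      fun ω => hasSum_rankOneCorrection_apply (he ω) (hv ω) (hTe_sum ω) x
  refine ⟨T + D, e, hT.add (.of_norm_le hD_meas (fun ω =>
      isCompactOperator_rankOneCorrection (he ω) (hv ω) (hTe_sum ω)) hD_norm),
    ae_of_all _ fun ω => by simpa using hD_norm ω, he_meas,
    ae_of_all _ fun ω => ⟨he ω, add_rankOneCorrection_apply_self (he ω) (hv ω) (hTe_sum ω)⟩⟩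

/-- Theorem A(ii) (construction): any bounded random compact operator can be `ε`-perturbed
to one possessing a measurable orthonormal family `(e_i)` of invariant directions with
`T̃(ω) e_i(ω) = (ε/3)^i e_i(θ ω)` for `i = 1, 2, …` (here indexed by `i + 1` for `i : ℕ`). -/
theorem perturbation_with_countably_many_exponents
    [NormedAddCommGroup H] [InnerProductSpace ℝ H] [CompleteSpace H] [SeparableSpace H]
    [MeasurableSpace H] [BorelSpace H] (hinf : ¬ FiniteDimensional ℝ H)
    [MeasurableSpace Ω] (μ : Measure Ω) [IsProbabilityMeasure μ]
    (θ : Ω ≃ᵐ Ω) (hθ : Ergodic (⇑θ) μ)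
    (T : Ω → H →L[ℝ] H) (hT : IsBddRandomCompactOp μ T)
    (ε : ℝ) (hε : ε ∈ Set.Ioo (0 : ℝ) 3) :
    ∃ (T' : Ω → H →L[ℝ] H) (e : ℕ → Ω → H), IsBddRandomCompactOp μ T' ∧
      (∀ᵐ ω ∂μ, ‖T ω - T' ω‖ ≤ ε) ∧
      (∀ i : ℕ, Measurable (e i)) ∧
      (∀ᵐ ω ∂μ, Orthonormal ℝ (fun i : ℕ => e i ω) ∧
        ∀ i : ℕ, T' ω (e i ω) = (ε / 3) ^ (i + 1) • e i (θ ω)) :=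
  perturbation_with_countably_many_exponents_general hinf μ θ T hT ε hε
end
end

section
/- Let T be a bounded random compact operator with T ∈ 𝒩 and let ε > 0. Then there exists a bounded random compact operator S such that ‖T − S‖_∞ ≤ ε, S(ω) is a finite-rank operator for ℙ-a.e. ω, and for ℙ-a.e. ω one has ‖S^n_ω‖ ≥ (ε/3)^n for every n ∈ ℕ. -/
open MeasureTheory Filter Topology TopologicalSpace
open scoped RealInnerProductSpace ENNReal

noncomputable section

variable {Ω H : Type*}

/-- The cocycle generated by a random operator: `T^0_ω = id`,
`T^{n+1}_ω = T^n_{θω} ∘ T(ω)`. -/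
def cocycle [NormedAddCommGroup H] [NormedSpace ℝ H] (θ : Ω → Ω) (T : Ω → H →L[ℝ] H) :
    ℕ → Ω → H →L[ℝ] H
  | 0, _ => ContinuousLinearMap.id ℝ H
  | n + 1, ω => (cocycle θ T n (θ ω)).comp (T ω)

/-- Membership in `𝒩`: for a.e. `ω`, `(1/n) log ‖T^n_ω‖ → -∞` (with `log 0 = -∞`),
equivalently for every `c : ℝ` eventually `‖T^n_ω‖ ≤ exp (c n)`. -/
def MemNullClass [NormedAddCommGroup H] [NormedSpace ℝ H] [MeasurableSpace Ω] (μ : Measure Ω)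
    (θ : Ω → Ω) (T : Ω → H →L[ℝ] H) : Prop :=
  ∀ᵐ ω ∂μ, ∀ c : ℝ, ∀ᶠ n : ℕ in atTop, ‖cocycle θ T n ω‖ ≤ Real.exp (c * n)

/-!
Project `T ω` onto the `N`-th space of a fixed exhausting sequence of finite-dimensional
subspaces; since compact operators are uniform limits of such truncations, this is within `ε/3`
for large `N`. Since compact operators send orthonormal sequences to `0`, some unit vector
`v ω` of a fixed orthonormal sequence has `‖T ω (v ω)‖ ≤ ε/3`. Taking the least admissible
indices makes both choices measurable. Now let `S ω` agree with the truncation on `(v ω)ᗮ` and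
send `v ω` to `(ε/3) • v (θ ω)`: then `‖T ω - S ω‖ ≤ ε/3 + ε/3 + ε/3`, and the cocycle of `S`
carries `v ω` to `(ε/3)^n • v (θ^n ω)`.
-/

section HilbertSpace

variable {𝕜 E G : Type*} [RCLike 𝕜] [NormedAddCommGroup E] [InnerProductSpace 𝕜 E]
  [NormedAddCommGroup G]

section ReplaceDirection

variable [NormedSpace 𝕜 G]

/-- For a unit vector `u`, the operator that agrees with `B` on `uᗮ` and sends `u` to `c • w`. -/
def replaceDirection (B : E →L[𝕜] G) (u : E) (w : G) (c : 𝕜) : E →L[𝕜] G :=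
  B - InnerProductSpace.rankOne 𝕜 (B u) u + c • InnerProductSpace.rankOne 𝕜 w u

variable {B : E →L[𝕜] G} {u : E} (w : G) (c : 𝕜)

@[simp]
theorem replaceDirection_apply (x : E) :
    replaceDirection B u w c x = B x - inner 𝕜 u x • B u + (c * inner 𝕜 u x) • w := by
  simp [replaceDirection, mul_smul]

theorem replaceDirection_apply_self (hu : ‖u‖ = 1) : replaceDirection B u w c u = c • w := by
  simp [inner_self_eq_norm_sq_to_K, hu]

theorem norm_sub_replaceDirection_le (hu : ‖u‖ = 1) (A : E →L[𝕜] G) :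
    ‖A - replaceDirection B u w c‖ ≤ ‖A - B‖ + ‖B u‖ + ‖c‖ * ‖w‖ := by
  have hdecomp : A - replaceDirection B u w c = (A - B) + InnerProductSpace.rankOne 𝕜 (B u) u -
      c • InnerProductSpace.rankOne 𝕜 w u := by
    simp only [replaceDirection]
    abel
  rw [hdecomp]
  refine (norm_sub_le_of_le (norm_add_le _ _) le_rfl).trans_eq ?_
  rw [norm_smul, InnerProductSpace.norm_rankOne, InnerProductSpace.norm_rankOne, hu, mul_one,
    mul_one]

theorem finiteDimensional_range_replaceDirection
    (hB : FiniteDimensional 𝕜 (LinearMap.range (B : E →ₗ[𝕜] G))) :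
    FiniteDimensional 𝕜 (LinearMap.range (replaceDirection B u w c : E →ₗ[𝕜] G)) := by
  suffices h : LinearMap.range (replaceDirection B u w c : E →ₗ[𝕜] G) ≤
      LinearMap.range (B : E →ₗ[𝕜] G) ⊔ 𝕜 ∙ w from Submodule.finiteDimensional_of_le h
  rintro _ ⟨x, rfl⟩
  rw [ContinuousLinearMap.coe_coe, replaceDirection_apply, ← map_smul, ← map_sub]
  exact Submodule.add_mem_sup (LinearMap.mem_range_self _ _)
    (Submodule.smul_mem _ _ (Submodule.mem_span_singleton_self w))

end ReplaceDirection

variable [InnerProductSpace 𝕜 G]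

theorem exists_orthonormal_nat_of_not_finiteDimensional [CompleteSpace E]
    (h : ¬ FiniteDimensional 𝕜 E) : ∃ e : ℕ → E, Orthonormal 𝕜 e := by
  obtain ⟨w, b, -⟩ := exists_hilbertBasis 𝕜 E
  have : Infinite w := by
    refine not_finite_iff_infinite.mp fun _ => h ?_
    have := Fintype.ofFinite w
    exact b.toOrthonormalBasis.toBasis.finiteDimensional_of_finite
  exact ⟨b ∘ Infinite.natEmbedding w, b.orthonormal.comp _ (Infinite.natEmbedding w).injective⟩

theorem Orthonormal.tendsto_inner_atTop_zero_s2 {e : ℕ → E} (he : Orthonormal 𝕜 e) (z : E) :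
    Tendsto (fun k => inner 𝕜 z (e k)) atTop (𝓝 0) := by
  have h := (he.inner_products_summable z).tendsto_atTop_zero.sqrt
  simp only [Real.sqrt_sq (norm_nonneg _), Real.sqrt_zero, norm_inner_symm (e _) z] at h
  exact tendsto_zero_iff_norm_tendsto_zero.mpr h

theorem IsCompactOperator.tendsto_apply_orthonormal_zero [CompleteSpace E] [CompleteSpace G]
    {A : E →L[𝕜] G} (hA : IsCompactOperator A) {e : ℕ → E} (he : Orthonormal 𝕜 e) :
    Tendsto (fun k => A (e k)) atTop (𝓝 0) := by
  obtain ⟨K, hK, hAK⟩ := hA.image_closedBall_subset_compact 1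
  refine hK.tendsto_nhds_of_unique_mapClusterPt
    (Eventually.of_forall fun k => hAK ⟨e k, by simp [he.1 k], rfl⟩) fun y _ hy => ?_
  have hinner : Tendsto (fun k => inner 𝕜 y (A (e k))) atTop (𝓝 0) := by
    simpa only [← ContinuousLinearMap.adjoint_inner_left] using
      he.tendsto_inner_atTop_zero_s2 (ContinuousLinearMap.adjoint A y)
  have hcluster := hy.tendsto_comp ((innerSL 𝕜 y).continuous.tendsto y)
  exact inner_self_eq_zero.mp
    (eq_of_nhds_neBot (Filter.NeBot.mono hcluster (inf_le_inf_left _ hinner)))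

theorem exists_monotone_finiteDimensional_dense [SeparableSpace E] :
    ∃ U : ℕ → Submodule 𝕜 E, (∀ n, FiniteDimensional 𝕜 (U n)) ∧ Monotone U ∧
      ⊤ ≤ (⨆ n, U n).topologicalClosure := by
  obtain ⟨d, hd⟩ := exists_dense_seq E
  refine ⟨fun n => Submodule.span 𝕜 (d '' Set.Iio n),
    fun n => FiniteDimensional.span_of_finite 𝕜 ((Set.finite_Iio n).image d),
    fun m n hmn => Submodule.span_mono (Set.image_mono (Set.Iio_subset_Iio hmn)), ?_⟩
  have hrange :
      Set.range d ⊆ ((⨆ n, Submodule.span 𝕜 (d '' Set.Iio n) : Submodule 𝕜 E) : Set E) := by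
    rintro _ ⟨m, rfl⟩
    exact Submodule.mem_iSup_of_mem (m + 1)
      (Submodule.subset_span (Set.mem_image_of_mem d (Set.mem_Iio.mpr m.lt_succ_self)))
  intro x _
  rw [← SetLike.mem_coe, Submodule.topologicalClosure_coe]
  exact closure_mono hrange (hd.closure_eq ▸ Set.mem_univ x)

theorem IsCompactOperator.tendsto_starProjection_comp {ι : Type*} [Preorder ι]
    {U : ι → Submodule 𝕜 G} [∀ i, (U i).HasOrthogonalProjection] (hU : Monotone U)
    (hdense : ⊤ ≤ (⨆ i, U i).topologicalClosure) {A : E →L[𝕜] G} (hA : IsCompactOperator A) :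
    Tendsto (fun i => (U i).starProjection ∘L A) atTop (𝓝 A) := by
  obtain ⟨K, hK, hAK⟩ := hA.image_closedBall_subset_compact 1
  have := isCompact_iff_compactSpace.mp hK
  -- Being uniformly Lipschitz, the projections converge uniformly on the compact set `K`.
  let P : ι → K → G := fun i y => (U i).starProjection y
  have hequi : Equicontinuous P := by
    refine (LipschitzWith.uniformEquicontinuous P 1 fun i => ?_).equicontinuous
    have hP : ‖(U i).starProjection‖₊ ≤ 1 := (U i).starProjection_norm_le
    exact (((U i).starProjection.lipschitz.weaken hP).comp (LipschitzWith.subtype_val K)).weaken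
      (mul_one 1).le
  have hunif : TendstoUniformly P (↑) atTop :=
    UniformFun.tendsto_iff_tendstoUniformly.mp <| (hequi.tendsto_uniformFun_iff_pi _ _).mpr <|
      tendsto_pi_nhds.mpr fun y => Submodule.starProjection_tendsto_self U hU y hdense
  refine Metric.tendsto_nhds.mpr fun δ hδ => ?_
  filter_upwards [Metric.tendstoUniformly_iff.mp hunif (δ / 2) (half_pos hδ)] with i hi
  refine lt_of_le_of_lt ?_ (half_lt_self hδ)
  rw [dist_eq_norm]
  refine ContinuousLinearMap.opNorm_le_of_unit_norm (half_pos hδ).le fun x hx => ?_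
  have hx : A x ∈ K := hAK ⟨x, by simp [hx], rfl⟩
  simpa [dist_eq_norm'] using (hi ⟨A x, hx⟩).le

theorem Submodule.finiteDimensional_range_starProjection_comp (K : Submodule 𝕜 G)
    [FiniteDimensional 𝕜 K] (A : E →L[𝕜] G) :
    FiniteDimensional 𝕜 (LinearMap.range (K.starProjection ∘L A : E →ₗ[𝕜] G)) := by
  refine Submodule.finiteDimensional_of_le (S₂ := K) ?_
  rintro _ ⟨x, rfl⟩
  exact K.starProjection_apply_mem _

theorem norm_sub_replaceDirection_starProjection_comp_le {u : E} (w : G) (c : 𝕜) (K : Submodule 𝕜 G)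
    [K.HasOrthogonalProjection] (hu : ‖u‖ = 1) (A : E →L[𝕜] G) :
    ‖A - replaceDirection (K.starProjection ∘L A) u w c‖ ≤
      ‖A - K.starProjection ∘L A‖ + ‖A u‖ + ‖c‖ * ‖w‖ :=
  (norm_sub_replaceDirection_le w c hu A).trans <| by
    gcongr
    exact K.norm_starProjection_apply_le (A u)

end HilbertSpace

theorem ContinuousLinearMap.isCompactOperator_of_finiteDimensional_range {𝕜 E G : Type*}
    [NontriviallyNormedField 𝕜] [ProperSpace 𝕜]
    [NormedAddCommGroup E] [NormedSpace 𝕜 E] [NormedAddCommGroup G] [NormedSpace 𝕜 G]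
    {B : E →L[𝕜] G} (hB : FiniteDimensional 𝕜 (LinearMap.range (B : E →ₗ[𝕜] G))) :
    IsCompactOperator B := by
  have : ProperSpace (LinearMap.range (B : E →ₗ[𝕜] G)) := FiniteDimensional.proper 𝕜 _
  exact (isCompactOperator_of_locallyCompactSpace_dom
    (B.codRestrict _ (LinearMap.mem_range_self (B : E →ₗ[𝕜] G)))).clm_comp
    (LinearMap.range (B : E →ₗ[𝕜] G)).subtypeL

section Measurability

variable [MeasurableSpace Ω]

theorem exists_measurable_nat_forall {p : Ω → ℕ → Prop} (hp : ∀ n, MeasurableSet {ω | p ω n})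
    (h : ∀ ω, ∃ n, p ω n) : ∃ N : Ω → ℕ, Measurable N ∧ ∀ ω, p ω (N ω) := by
  classical
  exact ⟨fun ω => Nat.find (h ω), measurable_find h hp, fun ω => Nat.find_spec (h ω)⟩

variable {𝕜 E G : Type*} [NontriviallyNormedField 𝕜]
  [NormedAddCommGroup E] [NormedSpace 𝕜 E] [NormedAddCommGroup G] [NormedSpace 𝕜 G]
  [MeasurableSpace G] {B : Ω → E →L[𝕜] G}

theorem measurableSet_setOf_opNorm_le [SeparableSpace E] [OpensMeasurableSpace G]
    (hB : ∀ x, Measurable fun ω => B ω x) {c : ℝ} (hc : 0 ≤ c) :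
    MeasurableSet {ω | ‖B ω‖ ≤ c} := by
  obtain ⟨D, hDc, hDd⟩ := exists_countable_dense E
  have hset : {ω | ‖B ω‖ ≤ c} = ⋂ x ∈ D, {ω | ‖B ω x‖ ≤ c * ‖x‖} := by
    ext ω
    simp only [Set.mem_ofPred_eq, Set.mem_iInter₂]
    refine ⟨fun h x _ => (B ω).le_of_opNorm_le h x, fun h => (B ω).opNorm_le_bound hc ?_⟩
    exact hDd.induction h (isClosed_le (B ω).continuous.norm (continuous_norm.const_mul c))
  rw [hset]
  exact .biInter hDc fun x _ => measurableSet_le (hB x).norm measurable_const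

theorem measurable_clm_apply_of_forall [MeasurableSpace E] [OpensMeasurableSpace E]
    [SecondCountableTopology E] [BorelSpace G] (hB : ∀ x, Measurable fun ω => B ω x)
    {u : Ω → E} (hu : Measurable u) : Measurable fun ω => B ω (u ω) :=
  (measurable_uncurry_of_continuous_of_measurable (fun ω => (B ω).continuous) hB).comp
    (hu.prodMk measurable_id)

theorem measurable_apply_of_nat {α β : Type*} [MeasurableSpace α] [MeasurableSpace β]
    {f : ℕ → α → β} (hf : ∀ n, Measurable (f n)) {N : Ω → ℕ} (hN : Measurable N) {y : Ω → α}
    (hy : Measurable y) : Measurable fun ω => f (N ω) (y ω) :=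
  (measurable_from_prod_countable_left (f := fun p : α × ℕ => f p.2 p.1) hf).comp (hy.prodMk hN)

end Measurability

section RandomOperator

variable [MeasurableSpace Ω] {E G : Type*} [NormedAddCommGroup E] [InnerProductSpace ℝ E]
  [NormedAddCommGroup G] [MeasurableSpace G] [BorelSpace G]

theorem measurable_replaceDirection_apply [NormedSpace ℝ G] [MeasurableSpace E] [BorelSpace E]
    [SecondCountableTopology E] [SecondCountableTopology G] {B : Ω → E →L[ℝ] G}
    (hB : ∀ x, Measurable fun ω => B ω x)
    {u : Ω → E} {w : Ω → G} (hu : Measurable u) (hw : Measurable w) (c : ℝ) (x : E) :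
    Measurable fun ω => replaceDirection (B ω) (u ω) (w ω) c x := by
  simp only [_root_.replaceDirection_apply]
  exact ((hB x).sub ((hu.inner measurable_const).smul (measurable_clm_apply_of_forall hB hu))).add
    ((measurable_const.mul (hu.inner measurable_const)).smul hw)

variable [InnerProductSpace ℝ G] {T : Ω → E →L[ℝ] G}

theorem exists_measurable_norm_sub_starProjection_comp_le [SeparableSpace E]
    [SecondCountableTopology G] {U : ℕ → Submodule ℝ G} [∀ n, (U n).HasOrthogonalProjection]
    (hU : Monotone U) (hdense : ⊤ ≤ (⨆ n, U n).topologicalClosure)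
    (hmeas : ∀ x, Measurable fun ω => T ω x)
    (hcompact : ∀ ω, IsCompactOperator (T ω)) {δ : ℝ} (hδ : 0 < δ) :
    ∃ N : Ω → ℕ, Measurable N ∧ ∀ ω, ‖T ω - (U (N ω)).starProjection ∘L T ω‖ ≤ δ :=
  exists_measurable_nat_forall (p := fun ω n => ‖T ω - (U n).starProjection ∘L T ω‖ ≤ δ)
    (fun n => measurableSet_setOf_opNorm_le
      (fun x => (hmeas x).sub ((U n).starProjection.continuous.measurable.comp (hmeas x))) hδ.le)
    fun ω => (((hcompact ω).tendsto_starProjection_comp hU hdense).eventually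
      (Metric.closedBall_mem_nhds _ hδ)).exists.imp fun _ h => by rwa [dist_eq_norm'] at h

theorem exists_measurable_norm_apply_orthonormal_le [CompleteSpace E] [CompleteSpace G]
    {e : ℕ → E} (he : Orthonormal ℝ e) (hmeas : ∀ x, Measurable fun ω => T ω x)
    (hcompact : ∀ ω, IsCompactOperator (T ω)) {δ : ℝ} (hδ : 0 < δ) :
    ∃ k : Ω → ℕ, Measurable k ∧ ∀ ω, ‖T ω (e (k ω))‖ ≤ δ :=
  exists_measurable_nat_forall (p := fun ω n => ‖T ω (e n)‖ ≤ δ)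
    (fun n => measurableSet_le (hmeas (e n)).norm measurable_const)
    fun ω => (((hcompact ω).tendsto_apply_orthonormal_zero he).eventually
      (Metric.closedBall_mem_nhds _ hδ)).exists.imp fun _ h => by simpa using h

end RandomOperator

theorem essSup_nnnorm_lt_top_of_norm_sub_le {α E : Type*} [MeasurableSpace α] {μ : Measure α}
    [SeminormedAddCommGroup E] {f g : α → E} {ε : ℝ} (hfg : ∀ᵐ a ∂μ, ‖f a - g a‖ ≤ ε)
    (hf : essSup (fun a => (‖f a‖₊ : ℝ≥0∞)) μ < ⊤) :
    essSup (fun a => (‖g a‖₊ : ℝ≥0∞)) μ < ⊤ := by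
  refine lt_of_le_of_lt (essSup_le_of_ae_le
    (essSup (fun a => (‖f a‖₊ : ℝ≥0∞)) μ + ENNReal.ofReal ε) ?_)
    (ENNReal.add_lt_top.mpr ⟨hf, ENNReal.ofReal_lt_top⟩)
  filter_upwards [hfg, ENNReal.ae_le_essSup fun a => (‖f a‖₊ : ℝ≥0∞)] with a ha hfa
  calc (‖g a‖₊ : ℝ≥0∞) ≤ ‖f a‖₊ + ‖f a - g a‖₊ := mod_cast nnnorm_le_nnnorm_add_nnnorm_sub _ _
    _ ≤ _ := add_le_add hfa ((ofReal_norm _).symm.trans_le (ENNReal.ofReal_le_ofReal ha))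

section Cocycle

variable [NormedAddCommGroup H] [NormedSpace ℝ H] {θ : Ω → Ω} {S : Ω → H →L[ℝ] H} {v : Ω → H}
  {c : ℝ}

theorem cocycle_apply_eq_pow_smul (h : ∀ ω, S ω (v ω) = c • v (θ ω)) (n : ℕ) (ω : Ω) :
    cocycle θ S n ω (v ω) = c ^ n • v (θ^[n] ω) := by
  induction n generalizing ω with
  | zero => simp [cocycle]
  | succ n ih =>
    rw [cocycle, ContinuousLinearMap.comp_apply, h, map_smul, ih, smul_smul, pow_succ',
      Function.iterate_succ_apply]

theorem pow_le_norm_cocycle (h : ∀ ω, S ω (v ω) = c • v (θ ω)) (hv : ∀ ω, ‖v ω‖ = 1)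
    (hc : 0 ≤ c) (n : ℕ) (ω : Ω) : c ^ n ≤ ‖cocycle θ S n ω‖ := by
  simpa [cocycle_apply_eq_pow_smul h, norm_smul, hv, abs_of_nonneg hc] using
    (cocycle θ S n ω).le_opNorm (v ω)

end Cocycle

theorem null_class_perturbation_finite_rank_general
    [NormedAddCommGroup H] [InnerProductSpace ℝ H] [CompleteSpace H] [SeparableSpace H]
    [MeasurableSpace H] [BorelSpace H] (hinf : ¬ FiniteDimensional ℝ H)
    [MeasurableSpace Ω] (μ : Measure Ω) (θ : Ω ≃ᵐ Ω)
    (T : Ω → H →L[ℝ] H) (hT : IsBddRandomCompactOp μ T)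
    (ε : ℝ) (hε : 0 < ε) :
    ∃ S : Ω → H →L[ℝ] H, IsBddRandomCompactOp μ S ∧
      (∀ᵐ ω ∂μ, ‖T ω - S ω‖ ≤ ε) ∧
      (∀ᵐ ω ∂μ, FiniteDimensional ℝ (LinearMap.range (S ω : H →ₗ[ℝ] H))) ∧
      (∀ᵐ ω ∂μ, ∀ n : ℕ, (ε / 3) ^ n ≤ ‖cocycle (⇑θ) S n ω‖) := by
  obtain ⟨U, hUfin, hU, hUdense⟩ := exists_monotone_finiteDimensional_dense (𝕜 := ℝ) (E := H)
  obtain ⟨e, he⟩ := exists_orthonormal_nat_of_not_finiteDimensional hinf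
  have hε3 : 0 < ε / 3 := by positivity
  obtain ⟨N, hNmeas, hN⟩ :=
    exists_measurable_norm_sub_starProjection_comp_le hU hUdense hT.meas hT.compact hε3
  obtain ⟨k, hkmeas, hk⟩ := exists_measurable_norm_apply_orthonormal_le he hT.meas hT.compact hε3
  let v : Ω → H := fun ω => e (k ω)
  let S : Ω → H →L[ℝ] H := fun ω =>
    replaceDirection ((U (N ω)).starProjection ∘L T ω) (v ω) (v (θ ω)) (ε / 3)
  have hTS : ∀ ω, ‖T ω - S ω‖ ≤ ε := fun ω => by
    refine (norm_sub_replaceDirection_starProjection_comp_le _ _ _ (he.1 _) _).trans ?_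
    rw [he.1, Real.norm_of_nonneg hε3.le]
    linarith [hN ω, hk ω]
  have hrange : ∀ ω, FiniteDimensional ℝ (LinearMap.range (S ω : H →ₗ[ℝ] H)) := fun ω =>
    finiteDimensional_range_replaceDirection _ _
      ((U (N ω)).finiteDimensional_range_starProjection_comp _)
  have hv : Measurable v := measurable_from_nat.comp hkmeas
  have hF : ∀ x, Measurable fun ω => ((U (N ω)).starProjection ∘L T ω) x := fun x =>
    (measurable_apply_of_nat (fun n => (U n).starProjection.continuous.measurable) hNmeas
      (hT.meas x) :)
  have hSmeas : ∀ x, Measurable fun ω => S ω x :=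
    measurable_replaceDirection_apply hF hv (hv.comp θ.measurable) _
  refine ⟨S, ⟨hSmeas, fun ω => (S ω).isCompactOperator_of_finiteDimensional_range (hrange ω),
    essSup_nnnorm_lt_top_of_norm_sub_le (ae_of_all _ hTS) hT.bdd⟩, ae_of_all _ hTS,
    ae_of_all _ hrange, ae_of_all _ fun ω n => pow_le_norm_cocycle
      (fun ω => replaceDirection_apply_self _ _ (he.1 _)) (fun ω => he.1 _) hε3.le n ω⟩

/-- Corollary 3.8 (quantitative form): any `T ∈ 𝒩` can be `ε`-perturbed to a random
finite-rank operator `S` whose cocycle norms satisfy `‖S^n_ω‖ ≥ (ε/3)^n`. -/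
theorem null_class_perturbation_finite_rank
    [NormedAddCommGroup H] [InnerProductSpace ℝ H] [CompleteSpace H] [SeparableSpace H]
    [MeasurableSpace H] [BorelSpace H] (hinf : ¬ FiniteDimensional ℝ H)
    [MeasurableSpace Ω] [StandardBorelSpace Ω] (μ : Measure Ω) [IsProbabilityMeasure μ]
    [NullSingletonClass μ] (θ : Ω ≃ᵐ Ω) (hθ : Ergodic (⇑θ) μ)
    (T : Ω → H →L[ℝ] H) (hT : IsBddRandomCompactOp μ T)
    (hTN : MemNullClass μ (⇑θ) T) (ε : ℝ) (hε : 0 < ε) :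
    ∃ S : Ω → H →L[ℝ] H, IsBddRandomCompactOp μ S ∧
      (∀ᵐ ω ∂μ, ‖T ω - S ω‖ ≤ ε) ∧
      (∀ᵐ ω ∂μ, FiniteDimensional ℝ (LinearMap.range (S ω : H →ₗ[ℝ] H))) ∧
      (∀ᵐ ω ∂μ, ∀ n : ℕ, (ε / 3) ^ n ≤ ‖cocycle (⇑θ) S n ω‖) :=
  null_class_perturbation_finite_rank_general hinf μ θ T hT ε hε
end
end

section
/- Let T be a bounded random compact operator, N ∈ ℕ with N ≥ 1, and V ∈ 𝓕 a measurable set such that V, θV, …, θ^{N−1}V are pairwise disjoint. Let g : Ω → H be a measurable map with ‖g(ω)‖ = 1 for ω ∈ V, and let ε ∈ (0, 1/6). Then there exists a bounded random compact operator S such that: S(ω) = T(ω) for ω ∉ ⋃_{i=0}^{N−1} θ^i V; ‖S(ω) − T(ω)‖ ≤ 3ε + 3ε‖T‖_∞ for ℙ-a.e. ω ∈ ⋃_{i=0}^{N−1} θ^i V; and for ℙ-a.e. ω ∈ V one has ‖S^N_ω g(ω)‖ ≥ ε·‖S^N_ω‖ and ‖S^N_ω‖ ≥ ε^{N+1}.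 -/
open MeasureTheory Filter Topology TopologicalSpace
open scoped RealInnerProductSpace ENNReal

noncomputable section

variable {Ω H : Type*}

/-- The essential supremum norm `‖T‖_∞` as a real number. -/
def supNorm [NormedAddCommGroup H] [NormedSpace ℝ H] [MeasurableSpace Ω] (μ : Measure Ω)
    (T : Ω → H →L[ℝ] H) : ℝ :=
  (essSup (fun ω => (‖T ω‖₊ : ℝ≥0∞)) μ).toReal

/-!
Put `δ = 3ε(1 + ‖T‖_∞)`. For vectors `a, c` one of `a ± δ • c` has norm at least `δ‖c‖`, their
difference being `2δ • c`. Hence for operators `A, B` and vectors `x, w` the rank-one map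
`P = ±δ ‖x‖⁻² ⟪x, ·⟫ w`, of norm `δ‖w‖/‖x‖`, satisfies `‖B ((A + P) x)‖ ≥ δ‖B w‖` for a sign
depending measurably on the data.

On the levels `θ^i V`, `1 ≤ i < N`, use this with `B = id` to push the vector `g ω₀` along the
orbit, so that the perturbed product `A` of these `N - 1` operators has `‖A‖ ≥ δ^(N-1)`. On `V`,
perturb `T ω₀` by `±δ ⟪g, ·⟫ u` with `‖u‖ ≤ 1` and `‖A‖ ≤ 2‖A u‖`; a dense sequence of `H`
lets one choose `u` measurably. Then `‖S^N g‖ ≥ δ‖A u‖`, while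
`‖S^N‖ ≤ ‖A‖‖T‖_∞ + δ‖A u‖ ≤ (2‖T‖_∞ + δ)‖A u‖`, which gives the alignment, and
`‖S^N‖ ≥ δ‖A u‖ ≥ δ^N / 2 ≥ ε^(N+1)`. Disjointness of the levels keeps the perturbations apart.
-/

section Cocycle

variable [NormedAddCommGroup H] [NormedSpace ℝ H]

theorem cocycle_succ_eq_comp (θ : Ω → Ω) (T : Ω → H →L[ℝ] H) (n : ℕ) (ω : Ω) :
    cocycle θ T (n + 1) ω = T (θ^[n] ω) ∘L cocycle θ T n ω := by
  induction n generalizing ω with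
  | zero => rfl
  | succ n ih =>
    rw [cocycle, ih (θ ω), cocycle, Function.iterate_succ_apply, ContinuousLinearMap.comp_assoc]

theorem cocycle_congr {θ : Ω → Ω} {S T : Ω → H →L[ℝ] H} {n : ℕ} {ω : Ω}
    (h : ∀ i < n, S (θ^[i] ω) = T (θ^[i] ω)) : cocycle θ S n ω = cocycle θ T n ω := by
  induction n with
  | zero => rfl
  | succ n ih =>
    rw [cocycle_succ_eq_comp, cocycle_succ_eq_comp, h n n.lt_succ_self,
      ih fun i hi => h i (hi.trans n.lt_succ_self)]

end Cocycle

section OpNorm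

variable {E F : Type*} [NormedAddCommGroup E] [NormedSpace ℝ E] [NormedAddCommGroup F]
  [NormedSpace ℝ F]

theorem ContinuousLinearMap.opNorm_eq_iSup_of_denseRange (A : E →L[ℝ] F) {d : ℕ → E}
    (hd : DenseRange d) : ‖A‖ = ⨆ k, ‖A (‖d k‖⁻¹ • d k)‖ := by
  have hle : ∀ k, ‖A (‖d k‖⁻¹ • d k)‖ ≤ ‖A‖ := fun k =>
    A.unit_le_opNorm _ (by rw [norm_smul, norm_inv, norm_norm]; exact inv_mul_le_one)
  have hbdd : BddAbove (Set.range fun k => ‖A (‖d k‖⁻¹ • d k)‖) :=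
    ⟨‖A‖, Set.forall_mem_range.2 hle⟩
  refine le_antisymm (A.opNorm_le_bound (le_ciSup_of_le hbdd 0 (norm_nonneg _)) fun x => ?_)
    (ciSup_le hle)
  -- `‖A x‖ ≤ m * ‖x‖` is a closed condition on `x` which holds on the dense range of `d`.
  refine hd.induction_on x (isClosed_le (by fun_prop) (by fun_prop)) fun k => ?_
  rcases eq_or_ne (d k) 0 with h | h
  · simp [h]
  · calc ‖A (d k)‖ = ‖A (‖d k‖⁻¹ • d k)‖ * ‖d k‖ := by
          rw [map_smul, norm_smul, norm_inv, norm_norm]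
          field_simp [norm_ne_zero_iff.2 h]
      _ ≤ _ := mul_le_mul_of_nonneg_right (le_ciSup hbdd k) (norm_nonneg _)

end OpNorm

section Measurability

variable {E F : Type*} [NormedAddCommGroup E] [NormedSpace ℝ E] [NormedAddCommGroup F]
  [NormedSpace ℝ F] [MeasurableSpace F] [BorelSpace F] [MeasurableSpace Ω]

theorem measurable_clm_apply [MeasurableSpace E] [BorelSpace E] [SeparableSpace E]
    {A : Ω → E →L[ℝ] F} (hA : ∀ x, Measurable fun ω => A ω x) {f : Ω → E} (hf : Measurable f) :
    Measurable fun ω => A ω (f ω) :=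
  (measurable_uncurry_of_continuous_of_measurable (u := fun x ω => A ω x)
    (fun ω => (A ω).continuous) hA).comp (hf.prodMk measurable_id)

theorem measurable_cocycle_apply [NormedAddCommGroup H] [NormedSpace ℝ H] [MeasurableSpace H]
    [BorelSpace H] [SeparableSpace H] {θ : Ω → Ω} (hθ : Measurable θ) {T : Ω → H →L[ℝ] H}
    (hT : ∀ x, Measurable fun ω => T ω x) (n : ℕ) (x : H) :
    Measurable fun ω => cocycle θ T n ω x := by
  induction n generalizing x with
  | zero => exact measurable_const
  | succ n ih => exact measurable_clm_apply (fun y => (ih y).comp hθ) (hT x)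

theorem measurable_opNorm [SeparableSpace E] {A : Ω → E →L[ℝ] F}
    (hA : ∀ x, Measurable fun ω => A ω x) : Measurable fun ω => ‖A ω‖ := by
  simp_rw [fun ω => (A ω).opNorm_eq_iSup_of_denseRange (denseRange_denseSeq E)]
  exact Measurable.iSup fun k => (hA _).norm

theorem exists_measurable_norming [MeasurableSpace E] [SeparableSpace E] {A : Ω → E →L[ℝ] F}
    (hA : ∀ x, Measurable fun ω => A ω x) :
    ∃ u : Ω → E, Measurable u ∧ (∀ ω, ‖u ω‖ ≤ 1) ∧ ∀ ω, ‖A ω‖ ≤ 2 * ‖A ω (u ω)‖ := by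
  classical
  set v : ℕ → E := fun k => ‖denseSeq E k‖⁻¹ • denseSeq E k
  have hv : ∀ k, ‖v k‖ ≤ 1 := fun k => by
    rw [norm_smul, norm_inv, norm_norm]; exact inv_mul_le_one
  have hex : ∀ ω, ∃ k, ‖A ω‖ ≤ 2 * ‖A ω (v k)‖ := by
    intro ω
    rcases (norm_nonneg (A ω)).eq_or_lt with h | h
    · exact ⟨0, h ▸ by positivity⟩
    · have hsup := (A ω).opNorm_eq_iSup_of_denseRange (denseRange_denseSeq E)
      obtain ⟨k, hk⟩ := exists_lt_of_lt_ciSup (hsup ▸ half_lt_self h)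
      exact ⟨k, by linarith⟩
  refine ⟨fun ω => v (Nat.find (hex ω)), ?_, fun ω => hv _, fun ω => Nat.find_spec (hex ω)⟩
  exact Measurable.find (fun k => measurable_const)
    (fun k => measurableSet_le (measurable_opNorm hA) ((hA _).norm.const_mul 2)) hex

end Measurability

section Push

variable {E : Type*} [NormedAddCommGroup E] [NormedSpace ℝ E]

def signChoice (δ : ℝ) (a c : E) : ℝ := if ‖a + δ • c‖ < ‖a - δ • c‖ then -1 else 1

theorem abs_signChoice (δ : ℝ) (a c : E) : |signChoice δ a c| = 1 := by
  unfold signChoice; split_ifs <;> simp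

theorem mul_norm_le_norm_add_signChoice_smul {δ : ℝ} (hδ : 0 ≤ δ) (a c : E) :
    δ * ‖c‖ ≤ ‖a + (signChoice δ a c * δ) • c‖ := by
  have h : 2 * (δ * ‖c‖) ≤ ‖a + δ • c‖ + ‖a - δ • c‖ := by
    calc 2 * (δ * ‖c‖) = ‖(a + δ • c) - (a - δ • c)‖ := by
          rw [add_sub_sub_cancel, ← two_smul ℝ, norm_smul, norm_smul, Real.norm_two,
            Real.norm_of_nonneg hδ]
      _ ≤ _ := norm_sub_le _ _
  unfold signChoice
  split_ifs with hlt
  · rw [neg_one_mul, neg_smul, ← sub_eq_add_neg]; linarith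
  · rw [one_mul]; linarith [not_lt.1 hlt]

theorem Measurable.signChoice [MeasurableSpace E] [BorelSpace E] [SecondCountableTopology E]
    [MeasurableSpace Ω] {a c : Ω → E} (ha : Measurable a) (hc : Measurable c) (δ : ℝ) :
    Measurable fun ω => _root_.signChoice δ (a ω) (c ω) :=
  Measurable.ite (measurableSet_lt (ha.add (hc.const_smul δ)).norm
    (ha.sub (hc.const_smul δ)).norm) measurable_const measurable_const

variable {F : Type*} [NormedAddCommGroup F] [NormedSpace ℝ F]
  [NormedAddCommGroup H] [InnerProductSpace ℝ H]

def pushPert (δ : ℝ) (B : H →L[ℝ] F) (A : H →L[ℝ] H) (x w : H) : H →L[ℝ] H :=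
  (signChoice δ (B (A x)) (B w) * δ * ‖x‖⁻¹ ^ 2) • InnerProductSpace.rankOne ℝ w x

theorem pushPert_apply_self (δ : ℝ) (B : H →L[ℝ] F) (A : H →L[ℝ] H) {x : H} (hx : x ≠ 0)
    (w : H) : pushPert δ B A x w x = (signChoice δ (B (A x)) (B w) * δ) • w := by
  rw [pushPert, smul_apply, InnerProductSpace.rankOne_apply,
    real_inner_self_eq_norm_sq, smul_smul]
  congr 1
  field_simp [norm_ne_zero_iff.2 hx]

theorem mul_norm_le_norm_add_pushPert_apply {δ : ℝ} (hδ : 0 ≤ δ) (B : H →L[ℝ] F)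
    (A : H →L[ℝ] H) {x : H} (hx : x ≠ 0) (w : H) :
    δ * ‖B w‖ ≤ ‖B ((A + pushPert δ B A x w) x)‖ := by
  rw [add_apply, pushPert_apply_self δ B A hx, map_add, map_smul]
  exact mul_norm_le_norm_add_signChoice_smul hδ _ _

theorem norm_comp_pushPert {G : Type*} [NormedAddCommGroup G] [NormedSpace ℝ G] {δ : ℝ}
    (hδ : 0 ≤ δ) (C : H →L[ℝ] G) (B : H →L[ℝ] F) (A : H →L[ℝ] H) (x w : H) :
    ‖C ∘L pushPert δ B A x w‖ = δ * ‖C w‖ * ‖x‖⁻¹ := by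
  rw [pushPert, ContinuousLinearMap.comp_smul, InnerProductSpace.comp_rankOne, norm_smul,
    InnerProductSpace.norm_rankOne, Real.norm_eq_abs, abs_mul, abs_mul, abs_signChoice,
    abs_of_nonneg hδ, abs_of_nonneg (by positivity)]
  rcases eq_or_ne x 0 with rfl | hx
  · simp
  · field_simp [norm_ne_zero_iff.2 hx]

theorem norm_pushPert {δ : ℝ} (hδ : 0 ≤ δ) (B : H →L[ℝ] F) (A : H →L[ℝ] H) (x w : H) :
    ‖pushPert δ B A x w‖ = δ * ‖w‖ * ‖x‖⁻¹ := by
  simpa using norm_comp_pushPert hδ (.id ℝ H) B A x w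

theorem isCompactOperator_pushPert (δ : ℝ) (B : H →L[ℝ] F) (A : H →L[ℝ] H) (x w : H) :
    IsCompactOperator (pushPert δ B A x w) := by
  refine IsCompactOperator.smul ?_ _
  rw [InnerProductSpace.rankOne_def']
  exact (isCompactOperator_of_locallyCompactSpace_rng
    (ContinuousLinearMap.toSpanSingleton ℝ w)).comp_clm _

theorem measurable_pushPert_apply [MeasurableSpace H] [BorelSpace H] [SeparableSpace H]
    [MeasurableSpace F] [BorelSpace F] [SecondCountableTopology F] [MeasurableSpace Ω]
    {B : Ω → H →L[ℝ] F} (hB : ∀ y, Measurable fun ω => B ω y) {A : Ω → H →L[ℝ] H}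
    (hA : ∀ y, Measurable fun ω => A ω y) {x w : Ω → H} (hx : Measurable x) (hw : Measurable w)
    (δ : ℝ) (y : H) : Measurable fun ω => pushPert δ (B ω) (A ω) (x ω) (w ω) y := by
  simp only [pushPert, smul_apply, InnerProductSpace.rankOne_apply]
  refine ((((measurable_clm_apply hB (measurable_clm_apply hA hx)).signChoice
    (measurable_clm_apply hB hw) δ).mul_const δ).mul (hx.norm.inv.pow_const 2)).smul
    ((hx.inner measurable_const).smul hw)

def pushChain (R : ℕ → H →L[ℝ] H) (δ : ℝ) (e : H) : ℕ → H
  | 0 => e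
  | j + 1 => (R j + pushPert δ (.id ℝ H) (R j) (pushChain R δ e j) (pushChain R δ e j))
      (pushChain R δ e j)

theorem pow_mul_norm_le_norm_pushChain (R : ℕ → H →L[ℝ] H) {δ : ℝ} (hδ : 0 ≤ δ) (e : H)
    (j : ℕ) : δ ^ j * ‖e‖ ≤ ‖pushChain R δ e j‖ := by
  induction j with
  | zero => simp [pushChain]
  | succ j ih =>
    rw [pow_succ', mul_assoc]
    rcases eq_or_ne (pushChain R δ e j) 0 with h | h
    · rw [h, norm_zero] at ih
      exact (mul_nonpos_of_nonneg_of_nonpos hδ ih).trans (norm_nonneg _)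
    · exact (mul_le_mul_of_nonneg_left ih hδ).trans
        (mul_norm_le_norm_add_pushPert_apply hδ (.id ℝ H) (R j) h _)

theorem measurable_pushChain [MeasurableSpace H] [BorelSpace H] [SeparableSpace H]
    [MeasurableSpace Ω] {R : Ω → ℕ → H →L[ℝ] H} (hR : ∀ j y, Measurable fun ω => R ω j y)
    {e : Ω → H} (he : Measurable e) (δ : ℝ) (j : ℕ) :
    Measurable fun ω => pushChain (R ω) δ (e ω) j := by
  induction j with
  | zero => exact he
  | succ j ih =>
    exact measurable_clm_apply (fun y => (hR j y).add
      (measurable_pushPert_apply (fun _ => measurable_const) (hR j) ih ih δ y)) ih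

end Push

section SumIndicator

variable {α ι M : Type*} {s : Finset ι} {W : ι → Set α} {a : α}

theorem Finset.sum_indicator_apply_of_mem [AddCommMonoid M] {P : ι → α → M}
    (hW : (s : Set ι).PairwiseDisjoint W) {j : ι} (hj : j ∈ s) (ha : a ∈ W j) :
    ∑ i ∈ s, (W i).indicator (P i) a = P j a := by
  rw [Finset.sum_eq_single_of_mem j hj fun i hi hij =>
    Set.indicator_of_notMem (fun hai => Set.disjoint_left.1 (hW hi hj hij) hai ha) _,
    Set.indicator_of_mem ha]

theorem Finset.sum_indicator_apply_of_notMem [AddCommMonoid M] {P : ι → α → M}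
    (ha : ∀ i ∈ s, a ∉ W i) : ∑ i ∈ s, (W i).indicator (P i) a = 0 :=
  Finset.sum_eq_zero fun i hi => Set.indicator_of_notMem (ha i hi) _

theorem norm_sum_indicator_apply_le [SeminormedAddCommGroup M] {P : ι → α → M}
    (hW : (s : Set ι).PairwiseDisjoint W) {C : ℝ} (hC : 0 ≤ C)
    (hP : ∀ i ∈ s, ∀ a ∈ W i, ‖P i a‖ ≤ C) : ‖∑ i ∈ s, (W i).indicator (P i) a‖ ≤ C := by
  by_cases h : ∃ i ∈ s, a ∈ W i
  · obtain ⟨j, hj, ha⟩ := h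
    rw [Finset.sum_indicator_apply_of_mem hW hj ha]
    exact hP j hj a ha
  · push Not at h
    rwa [Finset.sum_indicator_apply_of_notMem h, norm_zero]

variable [NormedAddCommGroup H] [NormedSpace ℝ H] {P : ι → α → H →L[ℝ] H}

theorem measurable_sum_indicator_apply [MeasurableSpace α] [MeasurableSpace H] [BorelSpace H]
    [SecondCountableTopology H] (hW : ∀ i ∈ s, MeasurableSet (W i))
    (hP : ∀ i ∈ s, ∀ x, Measurable fun a => P i a x) (x : H) :
    Measurable fun a => (∑ i ∈ s, (W i).indicator (P i) a) x := by
  have h : ∀ a, (∑ i ∈ s, (W i).indicator (P i) a) x =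
      ∑ i ∈ s, (W i).indicator (fun a => P i a x) a := fun a => by
    rw [sum_apply]
    refine Finset.sum_congr rfl fun i _ => ?_
    by_cases ha : a ∈ W i <;> simp [ha]
  simp_rw [h]
  exact Finset.measurable_sum _ fun i hi => (hP i hi x).indicator (hW i hi)

theorem isCompactOperator_sum_indicator (hP : ∀ i ∈ s, ∀ a ∈ W i, IsCompactOperator (P i a))
    (a : α) : IsCompactOperator ⇑(∑ i ∈ s, (W i).indicator (P i) a) := by
  refine Finset.sum_induction _ (fun f : H →L[ℝ] H => IsCompactOperator f)
    (fun _ _ hf hg => hf.add hg) isCompactOperator_zero fun i hi => ?_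
  by_cases ha : a ∈ W i
  · rw [Set.indicator_of_mem ha]; exact hP i hi a ha
  · rw [Set.indicator_of_notMem ha]; exact isCompactOperator_zero

end SumIndicator

section RandomOp

variable [NormedAddCommGroup H] [NormedSpace ℝ H] [MeasurableSpace H] [MeasurableSpace Ω]
  {μ : Measure Ω} {T : Ω → H →L[ℝ] H}

theorem IsBddRandomCompactOp.ae_norm_le_supNorm (hT : IsBddRandomCompactOp μ T) :
    ∀ᵐ ω ∂μ, ‖T ω‖ ≤ supNorm μ T := by
  filter_upwards [ENNReal.ae_le_essSup fun ω => (‖T ω‖₊ : ℝ≥0∞)] with ω hω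
  simpa [supNorm] using ENNReal.toReal_mono hT.bdd.ne hω

theorem IsBddRandomCompactOp.add_of_norm_le [BorelSpace H] [SecondCountableTopology H]
    (hT : IsBddRandomCompactOp μ T) {P : Ω → H →L[ℝ] H}
    (hPm : ∀ x, Measurable fun ω => P ω x) (hPc : ∀ ω, IsCompactOperator (P ω)) {C : ℝ}
    (hPb : ∀ ω, ‖P ω‖ ≤ C) : IsBddRandomCompactOp μ fun ω => T ω + P ω where
  meas x := (hT.meas x).add (hPm x)
  compact ω := (hT.compact ω).add (hPc ω)
  bdd := by
    have hle : (fun ω => (‖T ω + P ω‖₊ : ℝ≥0∞)) ≤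
        (fun ω => (‖T ω‖₊ : ℝ≥0∞)) + fun _ => ENNReal.ofReal C := fun ω => by
      calc (‖T ω + P ω‖₊ : ℝ≥0∞) ≤ ‖T ω‖₊ + ‖P ω‖₊ := by exact_mod_cast nnnorm_add_le _ _
        _ ≤ _ := add_le_add_right ((ofReal_norm _).symm.trans_le
          (ENNReal.ofReal_le_ofReal (hPb ω))) _
    calc essSup (fun ω => (‖T ω + P ω‖₊ : ℝ≥0∞)) μ
        ≤ essSup (fun ω => (‖T ω‖₊ : ℝ≥0∞)) μ + essSup (fun _ => ENNReal.ofReal C) μ :=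
          (essSup_mono_ae (ae_of_all _ hle)).trans (ENNReal.essSup_add_le _ _)
      _ ≤ essSup (fun ω => (‖T ω‖₊ : ℝ≥0∞)) μ + ENNReal.ofReal C := by
          gcongr; exact essSup_le_of_ae_le _ (ae_of_all _ fun _ => le_rfl)
      _ < ⊤ := ENNReal.add_lt_top.2 ⟨hT.bdd, ENNReal.ofReal_lt_top⟩

end RandomOp

theorem MeasurableSet.iterate_image [MeasurableSpace Ω] (θ : Ω ≃ᵐ Ω) {V : Set Ω}
    (hV : MeasurableSet V) (i : ℕ) : MeasurableSet ((⇑θ)^[i] '' V) := by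
  rw [Set.image_eq_preimage_of_inverse (Function.LeftInverse.iterate θ.symm_apply_apply i)
    (Function.RightInverse.iterate θ.apply_symm_apply i)]
  exact θ.symm.measurable.iterate i hV

section Tower

variable [NormedAddCommGroup H] [InnerProductSpace ℝ H] [MeasurableSpace Ω]
  (θ : Ω ≃ᵐ Ω) (T : Ω → H →L[ℝ] H) (V : Set Ω) (g u : Ω → H) (δ : ℝ) (n : ℕ)

/-- Lives on the level `θ^(i+1) V`; above `ω₀ ∈ V` it carries the `i`-th vector of the push chain
started at `g ω₀` to the `(i+1)`-st. -/
def growthPert (i : ℕ) (ω : Ω) : H →L[ℝ] H :=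
  let ω₀ := (⇑θ.symm)^[i + 1] ω
  let z := pushChain (fun j => T ((⇑θ)^[j + 1] ω₀)) δ (g ω₀) i
  pushPert δ (.id ℝ H) (T ω) z z

def growthOp (ω : Ω) : H →L[ℝ] H :=
  T ω + ∑ i ∈ Finset.range n, ((⇑θ)^[i + 1] '' V).indicator (growthPert θ T g δ i) ω

/-- Lives on the base `V`; `u ω` is meant to almost realise the norm of the product of the `n`
perturbed operators above `ω`. -/
def alignPert (ω : Ω) : H →L[ℝ] H :=
  pushPert δ (cocycle θ (growthOp θ T V g δ n) n (θ ω)) (T ω) (g ω) (u ω)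

def levelPert : ℕ → Ω → H →L[ℝ] H
  | 0 => alignPert θ T V g u δ n
  | i + 1 => growthPert θ T g δ i

def towerPert (ω : Ω) : H →L[ℝ] H :=
  T ω + ∑ i ∈ Finset.range (n + 1), ((⇑θ)^[i] '' V).indicator (levelPert θ T V g u δ n i) ω

variable {θ T V g u δ n}

theorem growthPert_iterate_apply (i : ℕ) (ω₀ : Ω) :
    growthPert θ T g δ i ((⇑θ)^[i + 1] ω₀) =
      let z := pushChain (fun j => T ((⇑θ)^[j + 1] ω₀)) δ (g ω₀) i
      pushPert δ (.id ℝ H) (T ((⇑θ)^[i + 1] ω₀)) z z := by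
  simp only [growthPert, Function.LeftInverse.iterate θ.symm_apply_apply (i + 1) ω₀]

theorem norm_levelPert_le (hδ : 0 ≤ δ) (hg : ∀ ω ∈ V, ‖g ω‖ = 1) (hu : ∀ ω, ‖u ω‖ ≤ 1)
    {i : ℕ} {ω : Ω} (hω : ω ∈ (⇑θ)^[i] '' V) : ‖levelPert θ T V g u δ n i ω‖ ≤ δ := by
  cases i with
  | zero =>
    rw [Function.iterate_zero, Set.image_id] at hω
    rw [levelPert, alignPert, norm_pushPert hδ, hg ω hω, inv_one, mul_one]
    exact mul_le_of_le_one_right hδ (hu ω)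
  | succ i =>
    rw [levelPert, growthPert, norm_pushPert hδ, mul_assoc]
    exact mul_le_of_le_one_right hδ mul_inv_le_one

theorem towerPert_eq_of_notMem {ω : Ω} (hω : ω ∉ ⋃ i ∈ Finset.range (n + 1), (⇑θ)^[i] '' V) :
    towerPert θ T V g u δ n ω = T ω := by
  rw [towerPert, Finset.sum_indicator_apply_of_notMem, add_zero]
  exact fun i hi hωi => hω (Set.mem_biUnion hi hωi)

variable (hdisj : (Set.Iio (n + 1)).PairwiseDisjoint fun i => (⇑θ)^[i] '' V)
include hdisj

theorem growthOp_iterate_apply {ω₀ : Ω} (hω₀ : ω₀ ∈ V) {i : ℕ} (hi : i < n) :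
    growthOp θ T V g δ n ((⇑θ)^[i + 1] ω₀) =
      T ((⇑θ)^[i + 1] ω₀) + growthPert θ T g δ i ((⇑θ)^[i + 1] ω₀) := by
  rw [growthOp, Finset.sum_indicator_apply_of_mem _ (Finset.mem_range.2 hi)
    (Set.mem_image_of_mem _ hω₀)]
  intro k hk l hl hkl
  simp only [Finset.coe_range, Set.mem_Iio] at hk hl
  exact hdisj (show k + 1 < n + 1 by omega) (show l + 1 < n + 1 by omega) (by omega)

theorem norm_towerPert_sub_le (hδ : 0 ≤ δ) (hg : ∀ ω ∈ V, ‖g ω‖ = 1) (hu : ∀ ω, ‖u ω‖ ≤ 1)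
    (ω : Ω) : ‖towerPert θ T V g u δ n ω - T ω‖ ≤ δ := by
  rw [towerPert, add_sub_cancel_left]
  exact norm_sum_indicator_apply_le (by rwa [Finset.coe_range]) hδ
    fun _ _ _ hω => norm_levelPert_le hδ hg hu hω

theorem towerPert_iterate_apply {ω₀ : Ω} (hω₀ : ω₀ ∈ V) {i : ℕ} (hi : i < n + 1) :
    towerPert θ T V g u δ n ((⇑θ)^[i] ω₀) =
      T ((⇑θ)^[i] ω₀) + levelPert θ T V g u δ n i ((⇑θ)^[i] ω₀) := by
  rw [towerPert, Finset.sum_indicator_apply_of_mem (by rwa [Finset.coe_range])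
    (Finset.mem_range.2 hi) (Set.mem_image_of_mem _ hω₀)]

theorem cocycle_growthOp_apply {ω₀ : Ω} (hω₀ : ω₀ ∈ V) {j : ℕ} (hj : j ≤ n) :
    cocycle θ (growthOp θ T V g δ n) j (θ ω₀) (g ω₀) =
      pushChain (fun j => T ((⇑θ)^[j + 1] ω₀)) δ (g ω₀) j := by
  induction j with
  | zero => rfl
  | succ j ih =>
    rw [cocycle_succ_eq_comp, ContinuousLinearMap.comp_apply, ih (by omega),
      ← Function.iterate_succ_apply, growthOp_iterate_apply hdisj hω₀ (by omega),
      growthPert_iterate_apply]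
    rfl

theorem pow_le_norm_cocycle_growthOp (hδ : 0 ≤ δ) {ω₀ : Ω} (hω₀ : ω₀ ∈ V) (hg : ‖g ω₀‖ = 1) :
    δ ^ n ≤ ‖cocycle θ (growthOp θ T V g δ n) n (θ ω₀)‖ :=
  calc δ ^ n = δ ^ n * ‖g ω₀‖ := by rw [hg, mul_one]
    _ ≤ ‖pushChain (fun j => T ((⇑θ)^[j + 1] ω₀)) δ (g ω₀) n‖ :=
      pow_mul_norm_le_norm_pushChain _ hδ _ n
    _ = ‖cocycle θ (growthOp θ T V g δ n) n (θ ω₀) (g ω₀)‖ := by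
      rw [cocycle_growthOp_apply hdisj hω₀ le_rfl]
    _ ≤ _ := ContinuousLinearMap.unit_le_opNorm _ _ hg.le

theorem cocycle_towerPert_succ {ω₀ : Ω} (hω₀ : ω₀ ∈ V) :
    cocycle θ (towerPert θ T V g u δ n) (n + 1) ω₀ =
      cocycle θ (growthOp θ T V g δ n) n (θ ω₀) ∘L (T ω₀ + alignPert θ T V g u δ n ω₀) := by
  have hbase : towerPert θ T V g u δ n ω₀ = T ω₀ + alignPert θ T V g u δ n ω₀ :=
    towerPert_iterate_apply (i := 0) hdisj hω₀ n.succ_pos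
  have habove : cocycle θ (towerPert θ T V g u δ n) n (θ ω₀) =
      cocycle θ (growthOp θ T V g δ n) n (θ ω₀) := cocycle_congr fun i hi => by
    rw [← Function.iterate_succ_apply, towerPert_iterate_apply hdisj hω₀ (by omega),
      growthOp_iterate_apply hdisj hω₀ hi]
    rfl
  rw [cocycle, habove, hbase]

theorem norm_cocycle_towerPert_le (hδ : 0 ≤ δ) {ω₀ : Ω} (hω₀ : ω₀ ∈ V) (hg : ‖g ω₀‖ = 1) :
    ‖cocycle θ (towerPert θ T V g u δ n) (n + 1) ω₀‖ ≤
      ‖cocycle θ (growthOp θ T V g δ n) n (θ ω₀)‖ * ‖T ω₀‖ +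
        δ * ‖cocycle θ (growthOp θ T V g δ n) n (θ ω₀) (u ω₀)‖ := by
  rw [cocycle_towerPert_succ hdisj hω₀, ContinuousLinearMap.comp_add]
  refine (norm_add_le _ _).trans (add_le_add (ContinuousLinearMap.opNorm_comp_le _ _) ?_)
  rw [alignPert, norm_comp_pushPert hδ, hg, inv_one, mul_one]

theorem mul_norm_le_norm_cocycle_towerPert_apply (hδ : 0 ≤ δ) {ω₀ : Ω} (hω₀ : ω₀ ∈ V)
    (hg : g ω₀ ≠ 0) :
    δ * ‖cocycle θ (growthOp θ T V g δ n) n (θ ω₀) (u ω₀)‖ ≤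
      ‖cocycle θ (towerPert θ T V g u δ n) (n + 1) ω₀ (g ω₀)‖ := by
  rw [cocycle_towerPert_succ hdisj hω₀]
  exact mul_norm_le_norm_add_pushPert_apply hδ _ _ hg _

end Tower

section TowerRandom

variable [NormedAddCommGroup H] [InnerProductSpace ℝ H] [MeasurableSpace H] [BorelSpace H]
  [SeparableSpace H] [MeasurableSpace Ω] {θ : Ω ≃ᵐ Ω} {T : Ω → H →L[ℝ] H} {V : Set Ω}
  {g u : Ω → H} {δ : ℝ} {n : ℕ}

theorem measurable_growthPert_apply (hT : ∀ x, Measurable fun ω => T ω x) (hg : Measurable g)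
    (i : ℕ) (x : H) : Measurable fun ω => growthPert θ T g δ i ω x := by
  have hz : Measurable fun ω => pushChain (fun j => T ((⇑θ)^[j + 1] ((⇑θ.symm)^[i + 1] ω))) δ
      (g ((⇑θ.symm)^[i + 1] ω)) i :=
    (measurable_pushChain (fun j y => (hT y).comp (θ.measurable.iterate _)) hg δ i).comp
      (θ.symm.measurable.iterate _)
  exact measurable_pushPert_apply (fun _ => measurable_const) hT hz hz δ x

theorem measurable_growthOp_apply (hV : MeasurableSet V) (hT : ∀ x, Measurable fun ω => T ω x)
    (hg : Measurable g) (x : H) : Measurable fun ω => growthOp θ T V g δ n ω x :=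
  (hT x).add (measurable_sum_indicator_apply (fun i _ => hV.iterate_image θ (i + 1))
    (fun i _ => measurable_growthPert_apply hT hg i) x)

theorem measurable_levelPert_apply (hV : MeasurableSet V) (hT : ∀ x, Measurable fun ω => T ω x)
    (hg : Measurable g) (hu : Measurable u) (i : ℕ) (x : H) :
    Measurable fun ω => levelPert θ T V g u δ n i ω x := by
  cases i with
  | zero =>
    exact measurable_pushPert_apply (fun y => (measurable_cocycle_apply θ.measurable
      (measurable_growthOp_apply hV hT hg) n y).comp θ.measurable) hT hg hu δ x
  | succ i => exact measurable_growthPert_apply hT hg i x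

theorem isBddRandomCompactOp_towerPert {μ : Measure Ω} (hT : IsBddRandomCompactOp μ T)
    (hV : MeasurableSet V) (hdisj : (Set.Iio (n + 1)).PairwiseDisjoint fun i => (⇑θ)^[i] '' V)
    (hg : Measurable g) (hg1 : ∀ ω ∈ V, ‖g ω‖ = 1) (hu : Measurable u)
    (hu1 : ∀ ω, ‖u ω‖ ≤ 1) (hδ : 0 ≤ δ) : IsBddRandomCompactOp μ (towerPert θ T V g u δ n) :=
  hT.add_of_norm_le
    (measurable_sum_indicator_apply (fun i _ => hV.iterate_image θ i)
      fun i _ => measurable_levelPert_apply hV hT.meas hg hu i)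
    (isCompactOperator_sum_indicator fun i _ ω _ => by
      cases i <;> exact isCompactOperator_pushPert _ _ _ _ _)
    fun _ => norm_sum_indicator_apply_le (by rwa [Finset.coe_range]) hδ
      fun _ _ _ hω => norm_levelPert_le hδ hg1 hu1 hω

end TowerRandom

theorem tower_perturbation_bounds {n : ℕ} {ε M δ a b c d t : ℝ}
    (hε : ε ∈ Set.Ioo (0 : ℝ) (1 / 6)) (hM : 0 ≤ M) (hδ : δ = 3 * ε + 3 * ε * M)
    (hb : δ ^ n ≤ b) (hab : b ≤ 2 * a) (ht : t ≤ M) (hc : c ≤ b * t + δ * a) (hd : δ * a ≤ d)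
    (hdc : d ≤ c) :
    ε * c ≤ d ∧ ε ^ (n + 2) ≤ c := by
  obtain ⟨hε0, hε6⟩ := hε
  have hδ0 : 0 ≤ δ := by rw [hδ]; positivity
  have hb0 : 0 ≤ b := (pow_nonneg hδ0 n).trans hb
  have ha0 : 0 ≤ a := by linarith
  constructor
  · have hkey : ε * (2 * M + δ) ≤ δ := by rw [hδ]; nlinarith
    calc ε * c ≤ ε * (2 * a * M + δ * a) := by
          gcongr; nlinarith [mul_le_mul_of_nonneg_left ht hb0]
      _ = ε * (2 * M + δ) * a := by ring
      _ ≤ δ * a := by gcongr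
      _ ≤ d := hd
  · have h3 : (3 : ℝ) ≤ 3 ^ (n + 1) := le_self_pow₀ (by norm_num) n.succ_ne_zero
    calc ε ^ (n + 2) = ε * ε ^ (n + 1) := by ring
      _ ≤ 3 ^ (n + 1) * ε ^ (n + 1) / 2 := by nlinarith [pow_pos hε0 (n + 1)]
      _ = (3 * ε) ^ (n + 1) / 2 := by rw [mul_pow]
      _ ≤ δ ^ (n + 1) / 2 := by gcongr; rw [hδ]; nlinarith
      _ = δ * δ ^ n / 2 := by ring
      _ ≤ δ * a := by nlinarith [mul_le_mul_of_nonneg_left hb hδ0]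
      _ ≤ c := hd.trans hdc

theorem tower_perturbation_general
    [NormedAddCommGroup H] [InnerProductSpace ℝ H] [SeparableSpace H]
    [MeasurableSpace H] [BorelSpace H]
    [MeasurableSpace Ω] (μ : Measure Ω)
    (θ : Ω ≃ᵐ Ω)
    (T : Ω → H →L[ℝ] H) (hT : IsBddRandomCompactOp μ T)
    (N : ℕ) (hN : 1 ≤ N) (V : Set Ω) (hV : MeasurableSet V)
    (hdisj : ∀ i < N, ∀ j < N, i ≠ j → Disjoint ((⇑θ)^[i] '' V) ((⇑θ)^[j] '' V))
    (g : Ω → H) (hg : Measurable g) (hg1 : ∀ ω ∈ V, ‖g ω‖ = 1)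
    (ε : ℝ) (hε : ε ∈ Set.Ioo (0 : ℝ) (1 / 6)) :
    ∃ S : Ω → H →L[ℝ] H, IsBddRandomCompactOp μ S ∧
      (∀ ω ∉ ⋃ i ∈ Finset.range N, (⇑θ)^[i] '' V, S ω = T ω) ∧
      (∀ᵐ ω ∂μ, ω ∈ ⋃ i ∈ Finset.range N, (⇑θ)^[i] '' V →
        ‖S ω - T ω‖ ≤ 3 * ε + 3 * ε * supNorm μ T) ∧
      (∀ᵐ ω ∂μ, ω ∈ V →
        ε * ‖cocycle (⇑θ) S N ω‖ ≤ ‖cocycle (⇑θ) S N ω (g ω)‖ ∧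
        ε ^ (N + 1) ≤ ‖cocycle (⇑θ) S N ω‖) := by
  obtain ⟨n, rfl⟩ : ∃ n, N = n + 1 := ⟨N - 1, by omega⟩
  have hdisj' : (Set.Iio (n + 1)).PairwiseDisjoint fun i => (⇑θ)^[i] '' V :=
    fun i hi j hj hij => hdisj i hi j hj hij
  have hM : 0 ≤ supNorm μ T := ENNReal.toReal_nonneg
  set δ := 3 * ε + 3 * ε * supNorm μ T with hδ
  have hδ0 : 0 ≤ δ := by have := hε.1; positivity
  obtain ⟨u, hu, hu1, hnorming⟩ := exists_measurable_norming fun x =>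
    (measurable_cocycle_apply θ.measurable (measurable_growthOp_apply (δ := δ) (n := n) hV
      hT.meas hg) n x).comp θ.measurable
  refine ⟨towerPert θ T V g u δ n,
    isBddRandomCompactOp_towerPert hT hV hdisj' hg hg1 hu hu1 hδ0,
    fun ω hω => towerPert_eq_of_notMem hω,
    ae_of_all _ fun ω _ => norm_towerPert_sub_le hdisj' hδ0 hg1 hu1 ω, ?_⟩
  filter_upwards [hT.ae_norm_le_supNorm] with ω hTω hω
  have hgω := hg1 ω hω
  exact tower_perturbation_bounds hε hM hδ (pow_le_norm_cocycle_growthOp hdisj' hδ0 hω hgω)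
    (hnorming ω) hTω (norm_cocycle_towerPert_le hdisj' hδ0 hω hgω)
    (mul_norm_le_norm_cocycle_towerPert_apply hdisj' hδ0 hω (norm_ne_zero_iff.1 (by simp [hgω])))
    ((cocycle _ _ _ ω).unit_le_opNorm _ hgω.le)

/-- Lemma 4.2: perturbation of a random compact operator along a finite tower of disjoint
sets `V, θV, …, θ^{N-1}V`. -/
theorem tower_perturbation
    [NormedAddCommGroup H] [InnerProductSpace ℝ H] [CompleteSpace H] [SeparableSpace H]
    [MeasurableSpace H] [BorelSpace H] (hinf : ¬ FiniteDimensional ℝ H)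
    [MeasurableSpace Ω] (μ : Measure Ω) [IsProbabilityMeasure μ]
    (θ : Ω ≃ᵐ Ω) (hθ : MeasurePreserving (⇑θ) μ μ)
    (T : Ω → H →L[ℝ] H) (hT : IsBddRandomCompactOp μ T)
    (N : ℕ) (hN : 1 ≤ N) (V : Set Ω) (hV : MeasurableSet V)
    (hdisj : ∀ i < N, ∀ j < N, i ≠ j → Disjoint ((⇑θ)^[i] '' V) ((⇑θ)^[j] '' V))
    (g : Ω → H) (hg : Measurable g) (hg1 : ∀ ω ∈ V, ‖g ω‖ = 1)
    (ε : ℝ) (hε : ε ∈ Set.Ioo (0 : ℝ) (1 / 6)) :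
    ∃ S : Ω → H →L[ℝ] H, IsBddRandomCompactOp μ S ∧
      (∀ ω ∉ ⋃ i ∈ Finset.range N, (⇑θ)^[i] '' V, S ω = T ω) ∧
      (∀ᵐ ω ∂μ, ω ∈ ⋃ i ∈ Finset.range N, (⇑θ)^[i] '' V →
        ‖S ω - T ω‖ ≤ 3 * ε + 3 * ε * supNorm μ T) ∧
      (∀ᵐ ω ∂μ, ω ∈ V →
        ε * ‖cocycle (⇑θ) S N ω‖ ≤ ‖cocycle (⇑θ) S N ω (g ω)‖ ∧
        ε ^ (N + 1) ≤ ‖cocycle (⇑θ) S N ω‖) :=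
  tower_perturbation_general μ θ T hT N hN V hV hdisj g hg hg1 ε hε
end
end

section
/- Let (C_ω)_{ω∈Ω} be a family of closed proper convex cones in H, let c, c′ : Ω → H be measurable with ‖c(ω)‖ = ‖c′(ω)‖ = 1, and let r > 0 be such that the closed ball B(c(ω), r) ⊆ C_ω and B(c′(ω), r) ⊆ C′_ω for all ω. Let T be a bounded random compact operator and N ∈ ℕ such that T^N_ω C_ω ⊆ C_{θ^N ω} for all ω, and let R > 0 be such that R·T^N_ω v − c(θ^N ω) ∈ C_{θ^N ω} for every ω and every v ∈ C_ω with ‖v‖ = 1. Then there exists ε > 0 such that every bounded random compact operator S with ‖S − T‖_∞ ≤ ε satisfies: S^N_ω C_ω ⊆ C_{θ^N ω} for all ω, and t·S^N_ω v − c(θ^N ω) ∈ C_{θ^N ω} for every t ≥ 4R/r, every ω, and every v ∈ C_ω with ‖v‖ = 1 (in particular β_{C_{θ^N ω}}(S^N_ω v, c(θ^N ω)) ≤ 4R/r). -/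
open MeasureTheory Filter Topology TopologicalSpace
open scoped RealInnerProductSpace ENNReal

noncomputable section

variable {Ω H : Type*}

/-- A closed proper convex cone. -/
def IsConvexProperCone [NormedAddCommGroup H] [NormedSpace ℝ H] (C : Set H) : Prop :=
  IsClosed C ∧ Convex ℝ C ∧ (∀ t : ℝ, 0 ≤ t → ∀ v ∈ C, t • v ∈ C) ∧ C ∩ (-C) = {0}

/-- The dual cone `C' = {u : ⟪u, v⟫ ≥ 0 for all v ∈ C}`. -/
def dualCone [NormedAddCommGroup H] [InnerProductSpace ℝ H] (C : Set H) : Set H :=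
  {u : H | ∀ v ∈ C, 0 ≤ ⟪u, v⟫}

/-!
If `R • T v - c ∈ C` for unit `v`, then a perturbation `p` of `T v` of size at most `r / (2R)`
is absorbed by the ball `B(c, r) ⊆ C`: writing `s = t / (2R)`, which is `≥ 1` because a ball
`B(c, r)` inside a proper cone has `r ≤ ‖c‖ = 1`,
`t • (T v + p) - c = s • (2 • (R • T v - c) + (c + 2R • p)) + (s - 1) • c`.
Over `N` steps the cocycle of `S` differs from that of `T` by at most `(M + ε)^N - M^N`, where `M`
bounds `‖T‖` almost surely, and this is below `r / (2R)` for small `ε`. Invariance of the cones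
under `S^N` then follows from the strict bound by homogeneity.
-/

open Metric

namespace IsConvexProperCone

variable {E F : Type*} [NormedAddCommGroup E] [NormedSpace ℝ E]
  [NormedAddCommGroup F] [NormedSpace ℝ F] {D : Set F}

theorem add_mem (hD : IsConvexProperCone D) {u v : F} (hu : u ∈ D) (hv : v ∈ D) :
    u + v ∈ D := by
  obtain ⟨-, hconv, hsmul, -⟩ := hD
  convert hsmul 2 zero_le_two _ (hconv hu hv (by norm_num : (0 : ℝ) ≤ 1 / 2)
    (by norm_num : (0 : ℝ) ≤ 1 / 2) (by norm_num)) using 1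
  module

theorem le_norm_of_closedBall_subset (hD : IsConvexProperCone D) {c : F} (hc : c ≠ 0)
    {r : ℝ} (hball : closedBall c r ⊆ D) : r ≤ ‖c‖ := by
  obtain ⟨-, -, hsmul, hproper⟩ := hD
  by_contra! hlt
  have hnorm : 0 < ‖c‖ := norm_pos_iff.2 hc
  have hratio : 1 < r / ‖c‖ := (one_lt_div hnorm).2 hlt
  have hpos : (1 - r / ‖c‖) • c ∈ D := hball <| by
    rw [mem_closedBall, dist_eq_norm,
      show (1 - r / ‖c‖) • c - c = (-(r / ‖c‖)) • c by module, norm_smul, norm_neg,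
      Real.norm_of_nonneg (by positivity), div_mul_cancel₀ _ hnorm.ne']
  have hneg : -((1 - r / ‖c‖) • c) ∈ D := by
    rw [← neg_smul]
    exact hsmul _ (by linarith) c (hball (mem_closedBall_self (hnorm.le.trans hlt.le)))
  have hzero : (1 - r / ‖c‖) • c ∈ D ∩ -D := ⟨hpos, Set.mem_neg.2 hneg⟩
  rw [hproper, Set.mem_singleton_iff, smul_eq_zero] at hzero
  linarith [hzero.resolve_right hc]

theorem smul_add_sub_mem (hD : IsConvexProperCone D) {c w p : F} {r R t : ℝ} (hR : 0 < R)
    (hball : closedBall c r ⊆ D) (hw : R • w - c ∈ D) (hp : ‖p‖ ≤ r / (2 * R))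
    (ht : 2 * R ≤ t) : t • (w + p) - c ∈ D := by
  have hsmul := hD.2.2.1
  have hc : c ∈ D := hball (mem_closedBall_self <| by
    simpa using (le_div_iff₀ (by positivity)).1 ((norm_nonneg p).trans hp))
  have hshift : c + (2 * R) • p ∈ D := hball <| by
    rw [mem_closedBall, dist_eq_norm, add_sub_cancel_left, norm_smul,
      Real.norm_of_nonneg (by positivity)]
    exact (le_div_iff₀' (by positivity)).1 hp
  have hdouble : (2 * R) • (w + p) - c ∈ D := by
    convert hD.add_mem (hsmul 2 zero_le_two _ hw) hshift using 1
    module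
  have hs : 1 ≤ t / (2 * R) := (one_le_div (by positivity)).2 ht
  convert hD.add_mem (hsmul _ (by linarith) _ hdouble) (hsmul (t / (2 * R) - 1) (by linarith) _ hc)
    using 1
  rw [smul_sub, smul_smul, div_mul_cancel₀ _ (by positivity)]
  module

theorem mapsTo_of_smul_sub_mem {C : Set E} (hC : IsConvexProperCone C)
    (hD : IsConvexProperCone D) {A : E →L[ℝ] F} {c : F} (hc : c ∈ D) {t : ℝ} (ht : 0 < t)
    (h : ∀ v ∈ C, ‖v‖ = 1 → t • A v - c ∈ D) : Set.MapsTo A C D := by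
  intro v hv
  rcases eq_or_ne v 0 with rfl | hv0
  · simpa using hD.2.2.1 0 le_rfl c hc
  have hn : 0 < ‖v‖ := norm_pos_iff.2 hv0
  have hu : ‖v‖⁻¹ • v ∈ C := hC.2.2.1 _ (inv_nonneg.2 hn.le) v hv
  have hu1 : ‖‖v‖⁻¹ • v‖ = 1 := by rw [norm_smul, norm_inv, norm_norm, inv_mul_cancel₀ hn.ne']
  convert hD.2.2.1 (‖v‖ / t) (by positivity) _ (hD.add_mem (h _ hu hu1) hc) using 1
  rw [sub_add_cancel, map_smul, smul_smul, smul_smul, div_mul_cancel₀ _ ht.ne',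
    mul_inv_cancel₀ hn.ne', one_smul]

end IsConvexProperCone

section Cocycle

variable [NormedAddCommGroup H] [NormedSpace ℝ H] (θ : Ω → Ω)

theorem norm_cocycle_le {T : Ω → H →L[ℝ] H} {B : ℝ} :
    ∀ {n : ℕ} {ω : Ω}, (∀ k < n, ‖T (θ^[k] ω)‖ ≤ B) → ‖cocycle θ T n ω‖ ≤ B ^ n
  | 0, _, _ => by simpa [cocycle] using ContinuousLinearMap.norm_id_le
  | n + 1, ω, hT => by
    have ih : ‖cocycle θ T n (θ ω)‖ ≤ B ^ n :=
      norm_cocycle_le fun k hk => hT (k + 1) (by omega)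
    calc ‖cocycle θ T (n + 1) ω‖ ≤ ‖cocycle θ T n (θ ω)‖ * ‖T ω‖ :=
          ContinuousLinearMap.opNorm_comp_le _ _
      _ ≤ B ^ n * B := mul_le_mul ih (hT 0 n.succ_pos) (norm_nonneg _) ((norm_nonneg _).trans ih)
      _ = B ^ (n + 1) := (pow_succ B n).symm

theorem norm_cocycle_sub_le {S T : Ω → H →L[ℝ] H} {B ε : ℝ} :
    ∀ {n : ℕ} {ω : Ω}, (∀ k < n, ‖T (θ^[k] ω)‖ ≤ B) →
      (∀ k < n, ‖S (θ^[k] ω) - T (θ^[k] ω)‖ ≤ ε) →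
      ‖cocycle θ S n ω - cocycle θ T n ω‖ ≤ (B + ε) ^ n - B ^ n
  | 0, _, _, _ => by simp [cocycle]
  | n + 1, ω, hT, hST => by
    have ih : ‖cocycle θ S n (θ ω) - cocycle θ T n (θ ω)‖ ≤ (B + ε) ^ n - B ^ n :=
      norm_cocycle_sub_le (fun k hk => hT (k + 1) (by omega)) (fun k hk => hST (k + 1) (by omega))
    have hTn : ‖cocycle θ T n (θ ω)‖ ≤ B ^ n := norm_cocycle_le θ fun k hk => hT (k + 1) (by omega)
    have hS : ‖S ω‖ ≤ B + ε :=
      (norm_le_norm_add_norm_sub' _ (T ω)).trans (add_le_add (hT 0 n.succ_pos) (hST 0 n.succ_pos))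
    have hsplit : cocycle θ S (n + 1) ω - cocycle θ T (n + 1) ω =
        (cocycle θ S n (θ ω) - cocycle θ T n (θ ω)).comp (S ω) +
          (cocycle θ T n (θ ω)).comp (S ω - T ω) := by
      simp only [cocycle, ContinuousLinearMap.sub_comp, ContinuousLinearMap.comp_sub]
      abel
    rw [hsplit]
    calc _ ≤ ((B + ε) ^ n - B ^ n) * (B + ε) + B ^ n * ε :=
          (norm_add_le _ _).trans <| add_le_add
            ((ContinuousLinearMap.opNorm_comp_le _ _).trans
              (mul_le_mul ih hS (norm_nonneg _) ((norm_nonneg _).trans ih)))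
            ((ContinuousLinearMap.opNorm_comp_le _ _).trans
              (mul_le_mul hTn (hST 0 n.succ_pos) (norm_nonneg _) ((norm_nonneg _).trans hTn)))
      _ = (B + ε) ^ (n + 1) - B ^ (n + 1) := by ring

end Cocycle

theorem IsBddRandomCompactOp.exists_ae_norm_le [NormedAddCommGroup H] [NormedSpace ℝ H]
    [MeasurableSpace H] [MeasurableSpace Ω] {μ : Measure Ω} {T : Ω → H →L[ℝ] H}
    (hT : IsBddRandomCompactOp μ T) : ∃ M : ℝ, ∀ᵐ ω ∂μ, ‖T ω‖ ≤ M :=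
  ⟨_, (ae_le_essSup (f := fun ω => (‖T ω‖₊ : ℝ≥0∞))).mono fun _ hω => by
    simpa using ENNReal.toReal_mono hT.bdd.ne hω⟩

theorem exists_pos_add_pow_sub_pow_lt (x : ℝ) (n : ℕ) {δ : ℝ} (hδ : 0 < δ) :
    ∃ ε > 0, (x + ε) ^ n - x ^ n < δ := by
  have hlim : Tendsto (fun ε : ℝ => (x + ε) ^ n - x ^ n) (𝓝[>] 0) (𝓝 0) :=
    ((((continuous_const.add continuous_id).pow n).sub continuous_const).tendsto' 0 0
      (by simp)).mono_left nhdsWithin_le_nhds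
  obtain ⟨ε, hε, hpos⟩ := ((hlim.eventually (gt_mem_nhds hδ)).and self_mem_nhdsWithin).exists
  exact ⟨ε, hpos, hε⟩

theorem cone_invariance_stable_under_perturbation_general
    [NormedAddCommGroup H] [InnerProductSpace ℝ H]
    [MeasurableSpace H]
    [MeasurableSpace Ω] (μ : Measure Ω)
    (θ : Ω ≃ᵐ Ω) (hθ : MeasurePreserving (⇑θ) μ μ)
    (C : Ω → Set H) (hcone : ∀ ω, IsConvexProperCone (C ω))
    (c : Ω → H)
    (hc1 : ∀ ω, ‖c ω‖ = 1)
    (r : ℝ) (hr : 0 < r)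
    (hball : ∀ ω, Metric.closedBall (c ω) r ⊆ C ω)
    (T : Ω → H →L[ℝ] H) (hT : IsBddRandomCompactOp μ T) (N : ℕ)
    (R : ℝ) (hR : 0 < R)
    (hstrict : ∀ ω, ∀ v ∈ C ω, ‖v‖ = 1 →
      R • cocycle (⇑θ) T N ω v - c ((⇑θ)^[N] ω) ∈ C ((⇑θ)^[N] ω)) :
    ∃ ε : ℝ, 0 < ε ∧ ∀ S : Ω → H →L[ℝ] H, IsBddRandomCompactOp μ S →
      (∀ᵐ ω ∂μ, ‖S ω - T ω‖ ≤ ε) →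
      ∀ᵐ ω ∂μ, (∀ v ∈ C ω, cocycle (⇑θ) S N ω v ∈ C ((⇑θ)^[N] ω)) ∧
        ∀ t : ℝ, 4 * R / r ≤ t → ∀ v ∈ C ω, ‖v‖ = 1 →
          t • cocycle (⇑θ) S N ω v - c ((⇑θ)^[N] ω) ∈ C ((⇑θ)^[N] ω) := by
  obtain ⟨M, hM⟩ := hT.exists_ae_norm_le
  obtain ⟨ε, hε, hεr⟩ := exists_pos_add_pow_sub_pow_lt M N (by positivity : 0 < r / (2 * R))
  refine ⟨ε, hε, fun S _ hS => ?_⟩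
  filter_upwards [ae_all_iff.2 fun k => (hθ.quasiMeasurePreserving.iterate k).ae (hM.and hS)]
    with ω hω
  have hdiff : ‖cocycle θ S N ω - cocycle θ T N ω‖ ≤ r / (2 * R) :=
    (norm_cocycle_sub_le θ (fun k _ => (hω k).1) (fun k _ => (hω k).2)).trans hεr.le
  have hr1 : r ≤ 1 := hc1 (θ^[N] ω) ▸ (hcone _).le_norm_of_closedBall_subset
    (norm_ne_zero_iff.1 (by simp [hc1])) (hball _)
  have h2R : 2 * R ≤ 4 * R / r := by rw [le_div_iff₀ hr]; nlinarith
  have hstrictS : ∀ t : ℝ, 4 * R / r ≤ t → ∀ v ∈ C ω, ‖v‖ = 1 →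
      t • cocycle θ S N ω v - c (θ^[N] ω) ∈ C (θ^[N] ω) := fun t ht v hv hv1 => by
    have hp := (cocycle θ S N ω - cocycle θ T N ω).le_of_opNorm_le hdiff v
    rw [hv1, mul_one] at hp
    simpa using (hcone _).smul_add_sub_mem hR (hball _) (hstrict ω v hv hv1) hp (h2R.trans ht)
  exact ⟨(hcone ω).mapsTo_of_smul_sub_mem (hcone _) (hball _ (mem_closedBall_self hr.le))
    (by positivity) (hstrictS _ le_rfl), hstrictS⟩

/-- Stability part of the proof of Proposition 3.3 (Generalized Krein–Rutman theorem):
strict invariance of a family of cones satisfying condition (C) persists under small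
perturbations in the essential supremum norm, with the uniform bound
`β_{C_{θ^N ω}}(S^N_ω v, c(θ^N ω)) ≤ 4R/r` expressed as
`t • S^N_ω v - c(θ^N ω) ∈ C_{θ^N ω}` for all `t ≥ 4R/r`. -/
theorem cone_invariance_stable_under_perturbation
    [NormedAddCommGroup H] [InnerProductSpace ℝ H] [CompleteSpace H] [SeparableSpace H]
    [MeasurableSpace H] [BorelSpace H] (hinf : ¬ FiniteDimensional ℝ H)
    [MeasurableSpace Ω] (μ : Measure Ω) [IsProbabilityMeasure μ]
    (θ : Ω ≃ᵐ Ω) (hθ : MeasurePreserving (⇑θ) μ μ)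
    (C : Ω → Set H) (hcone : ∀ ω, IsConvexProperCone (C ω))
    (c c' : Ω → H) (hc : Measurable c) (hc' : Measurable c')
    (hc1 : ∀ ω, ‖c ω‖ = 1) (hc'1 : ∀ ω, ‖c' ω‖ = 1)
    (r : ℝ) (hr : 0 < r)
    (hball : ∀ ω, Metric.closedBall (c ω) r ⊆ C ω)
    (hball' : ∀ ω, Metric.closedBall (c' ω) r ⊆ dualCone (C ω))
    (T : Ω → H →L[ℝ] H) (hT : IsBddRandomCompactOp μ T) (N : ℕ)
    (hinv : ∀ ω, ∀ v ∈ C ω, cocycle (⇑θ) T N ω v ∈ C ((⇑θ)^[N] ω))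
    (R : ℝ) (hR : 0 < R)
    (hstrict : ∀ ω, ∀ v ∈ C ω, ‖v‖ = 1 →
      R • cocycle (⇑θ) T N ω v - c ((⇑θ)^[N] ω) ∈ C ((⇑θ)^[N] ω)) :
    ∃ ε : ℝ, 0 < ε ∧ ∀ S : Ω → H →L[ℝ] H, IsBddRandomCompactOp μ S →
      (∀ᵐ ω ∂μ, ‖S ω - T ω‖ ≤ ε) →
      ∀ᵐ ω ∂μ, (∀ v ∈ C ω, cocycle (⇑θ) S N ω v ∈ C ((⇑θ)^[N] ω)) ∧
        ∀ t : ℝ, 4 * R / r ≤ t → ∀ v ∈ C ω, ‖v‖ = 1 →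
          t • cocycle (⇑θ) S N ω v - c ((⇑θ)^[N] ω) ∈ C ((⇑θ)^[N] ω) :=
  cone_invariance_stable_under_perturbation_general μ θ hθ C hcone c hc1 r hr hball T hT N R hR
    hstrict
end
end

section
/- Let H be a real Hilbert space, A : H → H a bounded linear operator, and v, u ∈ H with ‖v‖ = ‖u‖ = 1. Suppose K ≥ 2, δ > 0 and M > 0 satisfy ‖Av‖ ≥ K‖Au‖, ‖Av‖ ≥ δ, and ‖A‖ ≤ M. Then 1 − ⟨v, u⟩ ≥ δ²/(2K²M²). -/
open scoped RealInnerProductSpace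

theorem norm_le_two_mul_norm_sub_of_two_mul_norm_le {E : Type*} [SeminormedAddCommGroup E]
    {x y : E} (h : 2 * ‖y‖ ≤ ‖x‖) : ‖x‖ ≤ 2 * ‖x - y‖ := by
  linarith [norm_sub_norm_le x y]

theorem ContinuousLinearMap.norm_apply_le_two_mul_opNorm_mul_norm_sub
    {E F : Type*} [SeminormedAddCommGroup E] [SeminormedAddCommGroup F]
    [NormedSpace ℝ E] [NormedSpace ℝ F] (A : E →L[ℝ] F) {v u : E}
    (h : 2 * ‖A u‖ ≤ ‖A v‖) : ‖A v‖ ≤ 2 * ‖A‖ * ‖v - u‖ :=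
  calc ‖A v‖ ≤ 2 * ‖A v - A u‖ := norm_le_two_mul_norm_sub_of_two_mul_norm_le h
    _ = 2 * ‖A (v - u)‖ := by rw [map_sub]
    _ ≤ 2 * (‖A‖ * ‖v - u‖) := by gcongr; exact A.le_opNorm _
    _ = 2 * ‖A‖ * ‖v - u‖ := by ring

theorem norm_sub_sq_eq_two_mul_one_sub_inner_of_norm_eq_one
    {H : Type*} [NormedAddCommGroup H] [InnerProductSpace ℝ H] {v u : H}
    (hv : ‖v‖ = 1) (hu : ‖u‖ = 1) : ‖v - u‖ ^ 2 = 2 * (1 - ⟪v, u⟫) := by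
  rw [norm_sub_sq_real, hv, hu]
  ring

theorem angle_separation_of_domination_general
    {H : Type*} [NormedAddCommGroup H] [InnerProductSpace ℝ H]
    (A : H →L[ℝ] H) (v u : H) (hv : ‖v‖ = 1) (hu : ‖u‖ = 1)
    (K δ M : ℝ) (hK : 2 ≤ K) (hδ : 0 < δ)
    (hdom : K * ‖A u‖ ≤ ‖A v‖) (hlow : δ ≤ ‖A v‖) (hbdd : ‖A‖ ≤ M) :
    δ ^ 2 / (2 * K ^ 2 * M ^ 2) ≤ 1 - ⟪v, u⟫ := by
  have hdom₂ : 2 * ‖A u‖ ≤ ‖A v‖ :=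
    (mul_le_mul_of_nonneg_right hK (norm_nonneg _)).trans hdom
  have hsep : δ ≤ 2 * M * ‖v - u‖ :=
    calc δ ≤ ‖A v‖ := hlow
      _ ≤ 2 * ‖A‖ * ‖v - u‖ := A.norm_apply_le_two_mul_opNorm_mul_norm_sub hdom₂
      _ ≤ 2 * M * ‖v - u‖ := by gcongr
  have hgap := norm_sub_sq_eq_two_mul_one_sub_inner_of_norm_eq_one hv hu
  have hgap_nonneg : 0 ≤ 1 - ⟪v, u⟫ := by nlinarith [sq_nonneg ‖v - u‖]
  have hK_sq : 4 ≤ K ^ 2 := by nlinarith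
  refine div_le_of_le_mul₀ (by positivity) hgap_nonneg ?_
  calc δ ^ 2 ≤ (2 * M * ‖v - u‖) ^ 2 := pow_le_pow_left₀ hδ.le hsep 2
    _ = 4 * M ^ 2 * (2 * (1 - ⟪v, u⟫)) := by rw [mul_pow, hgap]; ring
    _ ≤ (1 - ⟪v, u⟫) * (2 * K ^ 2 * M ^ 2) := by
      nlinarith [mul_nonneg (sq_nonneg M) hgap_nonneg]

/-- Claim (i) of Remark 5.9 (abstract form): dominated growth of `A` along `v` relative to
`u`, together with a lower bound on `‖Av‖` and an upper bound on `‖A‖`, forces the angle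
between the unit vectors `v` and `u` to be uniformly separated from zero. -/
theorem angle_separation_of_domination
    {H : Type*} [NormedAddCommGroup H] [InnerProductSpace ℝ H]
    (A : H →L[ℝ] H) (v u : H) (hv : ‖v‖ = 1) (hu : ‖u‖ = 1)
    (K δ M : ℝ) (hK : 2 ≤ K) (hδ : 0 < δ) (hM : 0 < M)
    (hdom : K * ‖A u‖ ≤ ‖A v‖) (hlow : δ ≤ ‖A v‖) (hbdd : ‖A‖ ≤ M) :
    δ ^ 2 / (2 * K ^ 2 * M ^ 2) ≤ 1 - ⟪v, u⟫ :=
  angle_separation_of_domination_general A v u hv hu K δ M hK hδ hdom hlow hbdd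
end
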